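/- arXiv:1809.06950 — 5 statements merged into one kernel-verified Lean document; each statement's English description precedes it below -/
import Mathlib

section
/- For any graph G on n vertices with m edges, any integer k and real 0 ≤ β ≤ 1, the number of vertex subsets S of size k such that G[S] has at least β·C(k,2) edges is at most m^(μ+1) · n^(k − 2μ + 2), where μ = min{√β/2, 1 − √(1−β)}·k, assuming m, n ≥ 1. -/
/-!
A graph on `k` vertices with at least `β·C(k,2)` edges has a matching with
`M = ⌊min {√β/2, 1 - √(1-β)}·k⌋` edges. Indeed, by the Erdős–Gallai theorem a graph on `k` vertices
with no matching of size `s + 1` has at most `max {C(2s+1,2), C(s,2) + s(k-s)}` edges, and both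
terms are smaller than `β·C(k,2)` once `s + 1 ≤ min {√β/2, 1 - √(1-β)}·k`.

Erdős–Gallai is proved by compressions. Replacing `y` by a smaller `x` in the edges through `y`
(the UV-compression with `u = {x}`, `v = {y}`) keeps the number of edges, lowers the sum of all
edge entries, and creates no larger matching, since swapping `x` and `y` pulls a matching of the
compressed graph back; so we may assume the graph is compressed for all `x < y`. The pairs
`{i, 2s+1-i}`, `i ≤ s`, form a matching, so one of them, `{l, 2s+1-l}`, is not an edge; then every
edge meets `{0, …, l-1}` or lies in `[l, 2s+1-l)`, and the resulting bound is convex in `l`.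

Finally, a `β`-covered `k`-set `S` is determined by an `M`-matching of `G` inside `S` together with
the `k - 2M` vertices of `S` it leaves uncovered, so there are at most
`C(m, M)·C(n, k-2M) ≤ m^M·n^(k-2M)` of them.
-/

open Finset UV
open scoped FinsetFamily

theorem Sym2.toFinset_injective {α : Type*} [DecidableEq α] :
    Function.Injective (Sym2.toFinset : Sym2 α → Finset α) :=
  fun z w h => Sym2.ext fun x => by rw [← Sym2.mem_toFinset, h, Sym2.mem_toFinset]

lemma Sym2.toFinset_map {α β : Type*} [DecidableEq α] [DecidableEq β] (f : α ↪ β) (z : Sym2 α) :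
    (z.map f).toFinset = z.toFinset.map f := by
  ext x
  simp [Sym2.mem_map]

namespace BetaCovered

section Matching

variable {α β : Type*} {𝒜 ℬ : Finset (Finset α)} {M : ℕ}

def HasMatching (𝒜 : Finset (Finset α)) (M : ℕ) : Prop :=
  ∃ ℳ ⊆ 𝒜, #ℳ = M ∧ (ℳ : Set (Finset α)).PairwiseDisjoint id

lemma HasMatching.mono (h : 𝒜 ⊆ ℬ) : HasMatching 𝒜 M → HasMatching ℬ M :=
  fun ⟨ℳ, hℳ, hcard, hdisj⟩ => ⟨ℳ, hℳ.trans h, hcard, hdisj⟩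

lemma pairwiseDisjoint_image_map_iff [DecidableEq β] (f : α ↪ β) {ℳ : Finset (Finset α)} :
    ((ℳ.image (map f) : Finset (Finset β)) : Set (Finset β)).PairwiseDisjoint id
      ↔ (ℳ : Set (Finset α)).PairwiseDisjoint id := by
  rw [coe_image, Set.InjOn.pairwiseDisjoint_image (map_injective f).injOn]
  simp only [Set.PairwiseDisjoint, Set.Pairwise, Function.onFun, Function.comp_apply, id,
    disjoint_map]

lemma hasMatching_image_map_iff [DecidableEq β] (f : α ↪ β) :
    HasMatching (𝒜.image (map f)) M ↔ HasMatching 𝒜 M := by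
  constructor
  · rintro ⟨ℳ, hℳ, rfl, hdisj⟩
    obtain ⟨ℳ₀, hℳ₀, rfl⟩ := subset_image_iff.1 hℳ
    exact ⟨ℳ₀, hℳ₀, (card_image_of_injective _ (map_injective f)).symm,
      (pairwiseDisjoint_image_map_iff f).1 hdisj⟩
  · rintro ⟨ℳ, hℳ, rfl, hdisj⟩
    exact ⟨_, image_subset_image hℳ, card_image_of_injective _ (map_injective f),
      (pairwiseDisjoint_image_map_iff f).2 hdisj⟩

variable [DecidableEq α] {x y : α} {C : Finset α}

lemma mem_map_swap {z : α} :
    z ∈ C.map (Equiv.swap x y).toEmbedding ↔ Equiv.swap x y z ∈ C := by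
  rw [mem_map_equiv, Equiv.symm_swap]

lemma map_swap_eq_sup_sdiff (hx : x ∉ C) (hy : y ∈ C) :
    C.map (Equiv.swap x y).toEmbedding = (C ⊔ {x}) \ {y} := by
  ext z
  simp only [mem_map_swap, Equiv.swap_apply_def, sup_eq_union, mem_sdiff, mem_union, mem_singleton]
  split_ifs <;> grind

lemma map_swap_eq_self (h : x ∈ C ↔ y ∈ C) : C.map (Equiv.swap x y).toEmbedding = C := by
  ext z
  rw [mem_map_swap, Equiv.swap_apply_def]
  split_ifs <;> grind

/-- If a matching of the compressed family uses a member `B ∉ 𝒜`, then `x ∈ B`, and swapping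
`x` and `y` in all of its members moves it into `𝒜`. -/
lemma HasMatching.of_compression (h : HasMatching (𝓒 {x} {y} 𝒜) M) : HasMatching 𝒜 M := by
  obtain ⟨ℳ, hℳ, rfl, hdisj⟩ := h
  by_cases hold : ℳ ⊆ 𝒜
  · exact ⟨ℳ, hold, rfl, hdisj⟩
  obtain ⟨B, hBℳ, hB𝒜⟩ := not_subset.1 hold
  have hxB : x ∈ B := singleton_subset_iff.1 (le_of_mem_compression_of_notMem (hℳ hBℳ) hB𝒜)
  have hyB : y ∉ B :=
    disjoint_singleton_left.1 (disjoint_of_mem_compression_of_notMem (hℳ hBℳ) hB𝒜)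
  refine ⟨ℳ.image (map (Equiv.swap x y).toEmbedding), ?_,
    card_image_of_injective _ (map_injective _), (pairwiseDisjoint_image_map_iff _).2 hdisj⟩
  rintro _ hD
  obtain ⟨C, hCℳ, rfl⟩ := mem_image.1 hD
  have hC := hℳ hCℳ
  by_cases hyC : y ∈ C
  · have hC𝒜 : C ∈ 𝒜 := by
      by_contra hC𝒜
      exact disjoint_singleton_left.1 (disjoint_of_mem_compression_of_notMem hC hC𝒜) hyC
    by_cases hxC : x ∈ C
    · rwa [map_swap_eq_self (iff_of_true hxC hyC)]
    · rw [map_swap_eq_sup_sdiff hxC hyC]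
      exact sup_sdiff_mem_of_mem_compression hC (singleton_subset_iff.2 hyC)
        (disjoint_singleton_left.2 hxC)
  by_cases hxC : x ∈ C
  · obtain rfl : C = B := by
      by_contra hCB
      exact disjoint_left.1 (hdisj hCℳ hBℳ hCB) hxC hxB
    rw [Equiv.swap_comm, map_swap_eq_sup_sdiff hyB hxB]
    exact sup_sdiff_mem_of_mem_compression_of_notMem hC hB𝒜
  · rw [map_swap_eq_self (iff_of_false hxC hyC)]
    by_contra hC𝒜
    exact hxC (singleton_subset_iff.1 (le_of_mem_compression_of_notMem hC hC𝒜))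

end Matching

section ErdosGallai

variable {𝒜 : Finset (Finset ℕ)} {q s : ℕ} {x y : ℕ}

def weight (𝒜 : Finset (Finset ℕ)) : ℕ := ∑ A ∈ 𝒜, ∑ a ∈ A, a

lemma sum_compress_lt (hxy : x < y) {A : Finset ℕ} (h : compress {x} {y} A ≠ A) :
    ∑ a ∈ compress {x} {y} A, a < ∑ a ∈ A, a := by
  rw [compress, ite_ne_right_iff] at h
  obtain ⟨⟨hxA, hyA⟩, -⟩ := h
  rw [disjoint_singleton_left] at hxA
  rw [singleton_subset_iff] at hyA
  rw [compress_of_disjoint_of_le (disjoint_singleton_left.2 hxA) (singleton_subset_iff.2 hyA),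
    ← map_swap_eq_sup_sdiff hxA hyA, sum_map]
  refine sum_lt_sum (fun a ha => ?_) ⟨y, hyA, by simpa using hxy⟩
  rw [Equiv.toEmbedding_apply, Equiv.swap_apply_def]
  split_ifs <;> grind

lemma weight_compression_lt (hxy : x < y) (h : 𝓒 {x} {y} 𝒜 ≠ 𝒜) :
    weight (𝓒 {x} {y} 𝒜) < weight 𝒜 := by
  rw [compression] at h ⊢
  have hsplit := filter_union_filter_not_eq (fun A => compress {x} {y} A ∈ 𝒜) 𝒜
  have hmoved : {A ∈ 𝒜 | compress {x} {y} A ∉ 𝒜}.Nonempty := by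
    contrapose! h
    rw [filter_image, h, image_empty, union_empty]
    rwa [h, union_empty] at hsplit
  rw [weight, weight, sum_union compress_disjoint]
  conv_rhs => rw [← hsplit]
  rw [sum_union (disjoint_filter_filter_not _ _ _), add_lt_add_iff_left, filter_image,
    sum_image compress_injOn]
  exact sum_lt_sum_of_nonempty hmoved fun A hA => sum_compress_lt hxy (by grind)

lemma compression_subset_powersetCard (hxy : x < y) (h𝒜 : 𝒜 ⊆ (range q).powersetCard 2) :
    𝓒 {x} {y} 𝒜 ⊆ (range q).powersetCard 2 := by
  intro D hD
  by_cases hD𝒜 : D ∈ 𝒜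
  · exact h𝒜 hD𝒜
  have hxD : x ∈ D := singleton_subset_iff.1 (le_of_mem_compression_of_notMem hD hD𝒜)
  have hyD : y ∉ D := disjoint_singleton_left.1 (disjoint_of_mem_compression_of_notMem hD hD𝒜)
  obtain ⟨hsub, hcard⟩ :=
    mem_powersetCard.1 (h𝒜 (sup_sdiff_mem_of_mem_compression_of_notMem hD hD𝒜))
  have hyq : y < q := mem_range.1 (hsub (by simp [hxy.ne']))
  refine mem_powersetCard.2 ⟨fun z hz => ?_, ?_⟩
  · obtain rfl | hzx := eq_or_ne z x
    · exact mem_range.2 (hxy.trans hyq)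
    · exact hsub (by simp [hz, hzx])
  · rw [sup_eq_union, card_sdiff_of_subset (by simp [hxD]),
      card_union_of_disjoint (disjoint_singleton_right.2 hyD)] at hcard
    simpa using hcard

lemma exists_compressed (h𝒜 : 𝒜 ⊆ (range q).powersetCard 2) (hM : ¬HasMatching 𝒜 (s + 1)) :
    ∃ ℬ ⊆ (range q).powersetCard 2, #ℬ = #𝒜 ∧ ¬HasMatching ℬ (s + 1) ∧
      ∀ x y, x < y → IsCompressed {x} {y} ℬ := by
  classical
  obtain ⟨ℬ, hℬ, hmin⟩ := exists_min_image
    {ℬ ∈ ((range q).powersetCard 2).powerset | #ℬ = #𝒜 ∧ ¬HasMatching ℬ (s + 1)} weight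
    ⟨𝒜, mem_filter.2 ⟨mem_powerset.2 h𝒜, rfl, hM⟩⟩
  simp only [mem_filter, mem_powerset] at hℬ hmin
  obtain ⟨hℬq, hcard, hℬM⟩ := hℬ
  refine ⟨ℬ, hℬq, hcard, hℬM, fun x y hxy => ?_⟩
  by_contra hne
  exact (weight_compression_lt hxy hne).not_ge (hmin _ ⟨compression_subset_powersetCard hxy hℬq,
    (card_compression _ _ _).trans hcard, fun h => hℬM h.of_compression⟩)

lemma pair_mem_of_isCompressed {a : ℕ} (h : IsCompressed {x} {y} 𝒜) (hmem : {a, y} ∈ 𝒜)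
    (hxa : x ≠ a) (hxy : x ≠ y) (hay : a ≠ y) : {a, x} ∈ 𝒜 := by
  have := sup_sdiff_mem_of_mem_compression (h.eq.symm ▸ hmem) (by simp) (by simp [hxa, hxy])
  convert this using 1
  ext z
  simp only [mem_insert, mem_singleton, sup_eq_union, mem_sdiff, mem_union]
  grind

lemma pair_mem_of_le_of_le (hc : ∀ x y, x < y → IsCompressed {x} {y} 𝒜) {a b i j : ℕ}
    (hmem : {a, b} ∈ 𝒜) (hab : a < b) (hia : i ≤ a) (hjb : j ≤ b) (hij : i < j) :
    {i, j} ∈ 𝒜 := by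
  have hib : {i, b} ∈ 𝒜 := by
    obtain hia | rfl := hia.lt_or_eq
    · rw [pair_comm] at hmem ⊢
      exact pair_mem_of_isCompressed (hc i a hia) hmem (by omega) hia.ne (by omega)
    · exact hmem
  obtain hjb | rfl := hjb.lt_or_eq
  · exact pair_mem_of_isCompressed (hc j b hjb) hib (by omega) hjb.ne (by omega)
  · exact hib

lemma exists_pair_notMem (hM : ¬HasMatching 𝒜 (s + 1)) :
    ∃ l ≤ s, {l, 2 * s + 1 - l} ∉ 𝒜 := by
  by_contra! h
  have hinj : Set.InjOn (fun i => ({i, 2 * s + 1 - i} : Finset ℕ)) (range (s + 1)) := by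
    intro i hi j hj hij
    have : i ∈ ({j, 2 * s + 1 - j} : Finset ℕ) := by
      rw [← show ({i, 2 * s + 1 - i} : Finset ℕ) = {j, 2 * s + 1 - j} from hij]
      exact mem_insert_self _ _
    simp only [coe_range, Set.mem_Iio, mem_insert, mem_singleton] at hi hj this
    omega
  refine hM ⟨(range (s + 1)).image fun i => {i, 2 * s + 1 - i}, ?_, ?_, ?_⟩
  · simp only [image_subset_iff, mem_range]
    exact fun i hi => h i (by omega)
  · rw [card_image_of_injOn hinj, card_range]
  · rw [coe_image]
    rintro _ ⟨i, hi, rfl⟩ _ ⟨j, hj, rfl⟩ hne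
    have hij : i ≠ j := fun h => hne (by rw [h])
    simp only [coe_range, Set.mem_Iio] at hi hj
    simp only [Function.onFun, id, disjoint_insert_left, disjoint_insert_right, mem_insert,
      mem_singleton, disjoint_singleton]
    omega

lemma card_add_choose_le_of_isCompressed (h𝒜 : 𝒜 ⊆ (range q).powersetCard 2)
    (hM : ¬HasMatching 𝒜 (s + 1)) (hc : ∀ x y, x < y → IsCompressed {x} {y} 𝒜) :
    ∃ l ≤ s, #𝒜 + (q - l).choose 2 ≤ q.choose 2 + (2 * (s - l) + 1).choose 2 := by
  obtain ⟨l, hls, hl⟩ := exists_pair_notMem hM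
  refine ⟨l, hls, ?_⟩
  have hcover : 𝒜 ⊆ ((range q).powersetCard 2 \ (Ico l q).powersetCard 2) ∪
      (Ico l (2 * s + 1 - l)).powersetCard 2 := by
    intro A hA
    obtain ⟨hAq, hA2⟩ := mem_powersetCard.1 (h𝒜 hA)
    by_cases hAl : A ⊆ Ico l q
    · refine mem_union_right _ (mem_powersetCard.2 ⟨?_, hA2⟩)
      obtain ⟨a, b, hab, rfl⟩ := card_eq_two.1 hA2
      wlog hlt : a < b generalizing a b
      · rw [pair_comm] at hA hAq hAl hA2 ⊢
        exact this b a hab.symm hA hAq hA2 hAl (by omega)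
      simp only [insert_subset_iff, singleton_subset_iff, mem_Ico] at hAl ⊢
      have : b < 2 * s + 1 - l := by
        by_contra! hb
        exact hl (pair_mem_of_le_of_le hc hA hlt hAl.1.1 hb (by omega))
      omega
    · exact mem_union_left _ (mem_sdiff.2 ⟨h𝒜 hA, fun h => hAl (mem_powersetCard.1 h).1⟩)
  have hsub : (Ico l q).powersetCard 2 ⊆ (range q).powersetCard 2 :=
    powersetCard_mono (by rw [range_eq_Ico]; exact Ico_subset_Ico_left (Nat.zero_le l))
  have := (card_le_card hcover).trans (card_union_le _ _)
  rw [card_sdiff_of_subset hsub, card_powersetCard, card_powersetCard, card_powersetCard,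
    card_range, Nat.card_Ico, Nat.card_Ico,
    show 2 * s + 1 - l - l = 2 * (s - l) + 1 by omega] at this
  have := Nat.choose_le_choose 2 (Nat.sub_le q l)
  omega

lemma choose_two_add_choose_two_le {l : ℕ} (hls : l ≤ s) (hsq : s ≤ q) :
    q.choose 2 + (2 * (s - l) + 1).choose 2 ≤
      (q - l).choose 2 + max ((2 * s + 1).choose 2) (s.choose 2 + s * (q - s)) := by
  obtain rfl | hs := s.eq_zero_or_pos
  · obtain rfl : l = 0 := by omega
    simp
  rw [← Nat.cast_le (α := ℝ)]
  push_cast [Nat.cast_choose_two, Nat.cast_sub hls, Nat.cast_sub hsq,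
    Nat.cast_sub (hls.trans hsq)]
  set X : ℝ := (2 * s + 1) * (2 * s + 1 - 1) / 2 with hX
  set Y : ℝ := s * (s - 1) / 2 + s * (q - s) with hY
  set Z : ℝ := q * (q - 1) / 2 - (q - l) * (q - l - 1) / 2
    + (2 * (s - l) + 1) * (2 * (s - l) + 1 - 1) / 2 with hZ
  suffices Z ≤ max X Y by linarith
  have hsR : (0 : ℝ) < s := by exact_mod_cast hs
  have hlR : (l : ℝ) ≤ s := by exact_mod_cast hls
  have hl0 : (0 : ℝ) ≤ l := by positivity
  -- `Z` is a convex quadratic in `l`, equal to `X` at `l = 0` and to `Y` at `l = s`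
  have hconvex : s * Z = (s - l) * X + l * Y - 3 / 2 * s * l * (s - l) := by
    rw [hX, hY, hZ]; ring
  refine le_of_mul_le_mul_left ?_ hsR
  nlinarith [mul_le_mul_of_nonneg_left (le_max_left X Y) (sub_nonneg.2 hlR),
    mul_le_mul_of_nonneg_left (le_max_right X Y) hl0,
    mul_nonneg (mul_nonneg hl0 hsR.le) (sub_nonneg.2 hlR)]

theorem card_le_max_of_not_hasMatching (h𝒜 : 𝒜 ⊆ (range q).powersetCard 2)
    (hM : ¬HasMatching 𝒜 (s + 1)) :
    #𝒜 ≤ max ((2 * s + 1).choose 2) (s.choose 2 + s * (q - s)) := by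
  by_cases hq : q ≤ 2 * s + 1
  · calc #𝒜 ≤ #((range q).powersetCard 2) := card_le_card h𝒜
      _ = q.choose 2 := by rw [card_powersetCard, card_range]
      _ ≤ _ := (Nat.choose_le_choose 2 hq).trans (le_max_left _ _)
  obtain ⟨ℬ, hℬq, hcard, hℬM, hc⟩ := exists_compressed h𝒜 hM
  obtain ⟨l, hls, hl⟩ := card_add_choose_le_of_isCompressed hℬq hℬM hc
  have := choose_two_add_choose_two_le hls (by omega : s ≤ q)
  omega

end ErdosGallai

section Density

variable {β : ℝ} {s k : ℕ}

lemma min_sqrt_mem_Icc (hβ0 : 0 ≤ β) (hβ1 : β ≤ 1) :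
    min (√β / 2) (1 - √(1 - β)) ∈ Set.Icc (0 : ℝ) (1 / 2) :=
  ⟨le_min (by positivity) (sub_nonneg.2 (Real.sqrt_le_one.2 (by linarith))),
    (min_le_left _ _).trans (by linarith [Real.sqrt_le_one.2 hβ1])⟩

lemma choose_two_lt_of_add_one_le_sqrt (hβ0 : 0 ≤ β) (hβ1 : β ≤ 1)
    (hs : (s + 1 : ℝ) ≤ √β / 2 * k) : ((2 * s + 1).choose 2 : ℝ) < β * k.choose 2 := by
  have hsq : √β ≤ 1 := Real.sqrt_le_one.2 hβ1
  have hsq0 := Real.sqrt_nonneg β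
  -- with `a = √β k ≥ 2s + 2`: `β k (k - 1) = a² - √β a ≥ a (a - 1) > (2s + 1) 2s`
  have ha : β * k * k = (√β * k) ^ 2 := by rw [mul_pow, Real.sq_sqrt hβ0]; ring
  have hak : β * k ≤ √β * k := by
    have := Real.mul_self_sqrt hβ0
    nlinarith [mul_nonneg hsq0 (Nat.cast_nonneg (α := ℝ) k)]
  push_cast [Nat.cast_choose_two]
  nlinarith [Nat.cast_nonneg (α := ℝ) s]

lemma choose_two_add_mul_lt_of_add_one_le (hβ1 : β ≤ 1)
    (hs : (s + 1 : ℝ) ≤ (1 - √(1 - β)) * k) (hsk : 2 * (s + 1) ≤ k) :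
    (s.choose 2 + s * (k - s) : ℕ) < β * k.choose 2 := by
  have hc := Real.sq_sqrt (sub_nonneg.2 hβ1)
  have hc0 := Real.sqrt_nonneg (1 - β)
  -- with `y = k - s - 1 ≥ max (√(1-β) k) 1`:
  -- `C(k,2) - C(s,2) - s(k-s) = y (y + 1) / 2 > y² / 2 ≥ (1 - β) C(k,2)`
  have hk : (2 * (s + 1) : ℝ) ≤ k := by exact_mod_cast hsk
  have hck : (1 - β) * k * (k - 1) ≤ (√(1 - β) * k) ^ 2 := by
    rw [mul_pow, hc]
    nlinarith [mul_nonneg (sub_nonneg.2 hβ1) (Nat.cast_nonneg (α := ℝ) k)]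
  have hy : (√(1 - β) * k) ^ 2 ≤ (k - s - 1 : ℝ) ^ 2 :=
    pow_le_pow_left₀ (mul_nonneg hc0 (Nat.cast_nonneg k)) (by linarith) 2
  push_cast [Nat.cast_choose_two, Nat.cast_sub (show s ≤ k by omega)]
  nlinarith

theorem hasMatching_floor_of_card_ge {𝒜 : Finset (Finset ℕ)} (h𝒜 : 𝒜 ⊆ (range k).powersetCard 2)
    (hβ0 : 0 ≤ β) (hβ1 : β ≤ 1) (he : β * k.choose 2 ≤ #𝒜) :
    HasMatching 𝒜 ⌊min (√β / 2) (1 - √(1 - β)) * k⌋₊ := by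
  obtain ⟨hc0, hc1⟩ := min_sqrt_mem_Icc hβ0 hβ1
  set c := min (√β / 2) (1 - √(1 - β))
  obtain hM | hM := Nat.eq_zero_or_pos ⌊c * k⌋₊
  · exact ⟨∅, empty_subset _, by rw [hM, card_empty], by simp⟩
  obtain ⟨s, hs⟩ : ∃ s, ⌊c * k⌋₊ = s + 1 := ⟨_, (Nat.succ_pred_eq_of_pos hM).symm⟩
  have hsc : (s + 1 : ℝ) ≤ c * k := by
    exact_mod_cast hs ▸ Nat.floor_le (mul_nonneg hc0 (Nat.cast_nonneg k))
  have hsk : 2 * (s + 1) ≤ k := by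
    have : (2 * (s + 1) : ℝ) ≤ k := by nlinarith [Nat.cast_nonneg (α := ℝ) k]
    exact_mod_cast this
  rw [hs]
  by_contra hM
  have hlt := max_lt
    (choose_two_lt_of_add_one_le_sqrt hβ0 hβ1 (hsc.trans (by gcongr; exact min_le_left _ _)))
    (choose_two_add_mul_lt_of_add_one_le hβ1 (hsc.trans (by gcongr; exact min_le_right _ _)) hsk)
  have := ((Nat.cast_le (α := ℝ)).2 (card_le_max_of_not_hasMatching h𝒜 hM)).trans_eq
    (Nat.cast_max _ _)
  linarith

end Density

section Graph

variable {W V : Type*} [DecidableEq W] [DecidableEq V]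

lemma sized_image_toFinset_edgeFinset (H : SimpleGraph W) [Fintype H.edgeSet] :
    ((H.edgeFinset.image Sym2.toFinset : Finset (Finset W)) : Set (Finset W)).Sized 2 := by
  simp only [coe_image, Set.Sized, Set.forall_mem_image, mem_coe, SimpleGraph.mem_edgeFinset]
  exact fun z hz => Sym2.card_toFinset_of_not_isDiag z (H.not_isDiag_of_mem_edgeSet hz)

theorem hasMatching_edgeFinset_of_card_ge [Fintype W] (H : SimpleGraph W) [DecidableRel H.Adj]
    {β : ℝ} (hβ0 : 0 ≤ β) (hβ1 : β ≤ 1)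
    (he : β * (Fintype.card W).choose 2 ≤ #H.edgeFinset) :
    HasMatching (H.edgeFinset.image Sym2.toFinset)
      ⌊min (√β / 2) (1 - √(1 - β)) * Fintype.card W⌋₊ := by
  let f : W ↪ ℕ := (Fintype.equivFin W).toEmbedding.trans Fin.valEmbedding
  rw [← hasMatching_image_map_iff f]
  refine hasMatching_floor_of_card_ge (fun A hA => ?_) hβ0 hβ1 ?_
  · obtain ⟨B, hB, rfl⟩ := mem_image.1 hA
    refine mem_powersetCard.2 ⟨fun i hi => ?_, ?_⟩
    · obtain ⟨w, -, rfl⟩ := mem_map.1 hi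
      exact mem_range.2 (Fintype.equivFin W w).isLt
    · rw [card_map, sized_image_toFinset_edgeFinset H hB]
  · rwa [card_image_of_injective _ (map_injective f),
      card_image_of_injective _ Sym2.toFinset_injective]

theorem hasMatching_filter_subset_of_card_ge [Fintype V] (G : SimpleGraph V) [DecidableRel G.Adj]
    (S : Finset V) {β : ℝ} (hβ0 : 0 ≤ β) (hβ1 : β ≤ 1)
    (he : β * (#S).choose 2 ≤ (G.induce (S : Set V)).edgeSet.ncard) :
    HasMatching ((G.edgeFinset.image Sym2.toFinset).filter (· ⊆ S))
      ⌊min (√β / 2) (1 - √(1 - β)) * #S⌋₊ := by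
  rw [← SimpleGraph.coe_edgeFinset, Set.ncard_coe_finset] at he
  have := hasMatching_edgeFinset_of_card_ge (G.induce (S : Set V)) hβ0 hβ1 (by simpa using he)
  rw [show Fintype.card (S : Set V) = #S by simp,
    ← hasMatching_image_map_iff (Function.Embedding.subtype _)] at this
  refine this.mono fun A hA => ?_
  simp only [image_image, mem_image, Function.comp_apply, SimpleGraph.mem_edgeFinset] at hA
  obtain ⟨z, hz, rfl⟩ := hA
  refine mem_filter.2 ⟨mem_image.2 ⟨z.map (Function.Embedding.subtype _), ?_,
    Sym2.toFinset_map _ z⟩, fun v hv => ?_⟩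
  · induction z with
    | h a b => simpa using hz
  · obtain ⟨w, -, rfl⟩ := mem_map.1 hv
    exact w.2

theorem card_le_choose_mul_choose [Fintype V] {𝒢 : Finset (Finset V)} {r k M : ℕ}
    (h𝒢 : (𝒢 : Set (Finset V)).Sized r) (𝒮 : Finset (Finset V))
    (h𝒮 : ∀ S ∈ 𝒮, #S = k ∧ HasMatching (𝒢.filter (· ⊆ S)) M) :
    #𝒮 ≤ (#𝒢).choose M * (Fintype.card V).choose (k - r * M) := by
  choose! ℳ hℳ𝒢 hℳcard hℳdisj using fun S hS => (h𝒮 S hS).2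
  have hcover : ∀ S ∈ 𝒮, (ℳ S).biUnion id ⊆ S ∧ #((ℳ S).biUnion id) = r * M := by
    intro S hS
    refine ⟨biUnion_subset.2 fun A hA => (mem_filter.1 (hℳ𝒢 S hS hA)).2, ?_⟩
    rw [card_biUnion (hℳdisj S hS), sum_const_nat (f := fun A => #(id A))
      fun A hA => h𝒢 (mem_filter.1 (hℳ𝒢 S hS hA)).1, hℳcard S hS, mul_comm]
  calc #𝒮 ≤ #(𝒢.powersetCard M ×ˢ (univ : Finset V).powersetCard (k - r * M)) := by
        refine card_le_card_of_injOn (fun S => (ℳ S, S \ (ℳ S).biUnion id))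
          (fun S hS => ?_) fun S hS T hT hST => ?_
        · simp only [coe_product, Set.mem_prod, mem_coe, mem_powersetCard, subset_univ, true_and]
          refine ⟨⟨(hℳ𝒢 S hS).trans (filter_subset _ _), hℳcard S hS⟩, ?_⟩
          rw [card_sdiff_of_subset (hcover S hS).1, (hcover S hS).2, (h𝒮 S hS).1]
        · obtain ⟨hℳST, hrest⟩ := Prod.mk.inj hST
          rw [← sdiff_union_of_subset (hcover S hS).1, ← sdiff_union_of_subset (hcover T hT).1,
            hrest, hℳST]
    _ = (#𝒢).choose M * (Fintype.card V).choose (k - r * M) := by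
        rw [card_product, card_powersetCard, card_powersetCard, card_univ]

end Graph

lemma pow_floor_mul_pow_le_rpow {m n k : ℕ} {μ : ℝ} (hm : 1 ≤ m) (hn : 1 ≤ n) (hμ0 : 0 ≤ μ)
    (hμk : 2 * μ ≤ k) :
    ((m ^ ⌊μ⌋₊ * n ^ (k - 2 * ⌊μ⌋₊) : ℕ) : ℝ) ≤
      (m : ℝ) ^ (μ + 1) * (n : ℝ) ^ ((k : ℝ) - 2 * μ + 2) := by
  have hfloor := Nat.floor_le hμ0
  have hfloor' := Nat.lt_floor_add_one μ
  have h2M : 2 * ⌊μ⌋₊ ≤ k := by exact_mod_cast (by linarith : (2 * ⌊μ⌋₊ : ℝ) ≤ k)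
  have hm1 : (1 : ℝ) ≤ m := by exact_mod_cast hm
  have hn1 : (1 : ℝ) ≤ n := by exact_mod_cast hn
  rw [Nat.cast_mul, Nat.cast_pow, Nat.cast_pow, ← Real.rpow_natCast, ← Real.rpow_natCast]
  gcongr
  · linarith
  · push_cast [Nat.cast_sub h2M]
    linarith

end BetaCovered

open BetaCovered

open Real in
/-- For a graph `G` on `n ≥ 1` vertices with `m ≥ 1` edges, any `k` and real `0 ≤ β ≤ 1`,
the number of `k`-subsets `S` such that `G[S]` has at least `β * C(k,2)` edges is at most
`m ^ (μ + 1) * n ^ (k - 2μ + 2)`, where `μ = min {√β / 2, 1 - √(1-β)} * k`. -/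
theorem count_beta_covered {V : Type} [Fintype V] (n m k : ℕ) (β μ : ℝ)
    (hβ0 : 0 ≤ β) (hβ1 : β ≤ 1) (hm : 1 ≤ m) (hn : 1 ≤ n)
    (hμ : μ = min (Real.sqrt β / 2) (1 - Real.sqrt (1 - β)) * k)
    (G : SimpleGraph V) (hcard : Fintype.card V = n) (hedges : G.edgeSet.ncard = m) :
    (({S : Finset V | S.card = k ∧
          β * (k.choose 2 : ℕ) ≤ ((G.induce (S : Set V)).edgeSet.ncard : ℝ)}.ncard : ℕ) : ℝ)
      ≤ (m : ℝ) ^ (μ + 1) * (n : ℝ) ^ ((k : ℝ) - 2 * μ + 2) := by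
  classical
  obtain ⟨hc0, hc1⟩ := min_sqrt_mem_Icc hβ0 hβ1
  have hμ0 : 0 ≤ μ := hμ ▸ mul_nonneg hc0 (Nat.cast_nonneg k)
  have hμk : 2 * μ ≤ k := hμ ▸ by nlinarith [Nat.cast_nonneg (α := ℝ) k]
  set 𝒮 := ({S | #S = k ∧ β * (k.choose 2 : ℕ) ≤ ((G.induce (S : Set V)).edgeSet.ncard : ℝ)} :
    Finset (Finset V))
  have hcount := card_le_choose_mul_choose (sized_image_toFinset_edgeFinset G) 𝒮 (k := k)
    (M := ⌊μ⌋₊) fun S hS => by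
      obtain ⟨rfl, he⟩ := (mem_filter.1 hS).2
      exact ⟨rfl, hμ ▸ hasMatching_filter_subset_of_card_ge G S hβ0 hβ1 he⟩
  have hedges' : #(G.edgeFinset.image Sym2.toFinset) ≤ m := card_image_le.trans_eq
    (by rw [← hedges, ← SimpleGraph.coe_edgeFinset, Set.ncard_coe_finset])
  rw [show {S : Finset V | _} = (𝒮 : Set (Finset V)) by ext; simp [𝒮], Set.ncard_coe_finset]
  calc (#𝒮 : ℝ) ≤ ((m ^ ⌊μ⌋₊ * n ^ (k - 2 * ⌊μ⌋₊) : ℕ) : ℝ) := by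
        refine Nat.cast_le.2 (hcount.trans (Nat.mul_le_mul ?_ ?_))
        · exact (Nat.choose_le_pow _ _).trans (Nat.pow_le_pow_left hedges' _)
        · exact hcard ▸ Nat.choose_le_pow _ _
    _ ≤ _ := pow_floor_mul_pow_le_rpow hm hn hμ0 hμk
end

section
/- Every graph H on k vertices with t ≥ 1 edges contains a matching of size at least ⌊min{√β/2, 1 − √(1−β)}·k⌋, where β = t / C(k,2). -/
/-!
The bound comes from the Erdős–Gallai theorem: a graph whose matchings have at most `m` edges
and whose edges lie on an `n`-set has at most `max (C(2m+1, 2)) (C(m, 2) + m (n - m))` edges.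
This is proved by induction on `m`. If the support has at most `2m + 1` vertices we are done;
otherwise a vertex of degree `> 2m` can be deleted, lowering the matching number; and if there
is none, two vertices missed by a maximum matching have degree sum at most `2m` (a larger sum
gives an augmenting path `u - x = y - u'`), so deleting the lower-degree one together with a
neighbour removes at most `3m` edges and again lowers the matching number.

For `1 ≤ N ≤ μ`, the inequalities `N ≤ √β k / 2` and `N ≤ (1 - √(1 - β)) k` imply that
`t = β C(k, 2)` exceeds both terms of the Erdős–Gallai bound for `m = N - 1`, so the matching
number is at least `N`.
-/

open Finset

namespace SimpleGraph

variable {V : Type*} {G G' : SimpleGraph V} {M M' : Finset (Sym2 V)} {u u' v w x y : V}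

def IsMatchingEdges (G : SimpleGraph V) (M : Finset (Sym2 V)) : Prop :=
  (M : Set (Sym2 V)) ⊆ G.edgeSet ∧ ∀ e ∈ M, ∀ f ∈ M, ∀ v ∈ e, v ∈ f → e = f

lemma isMatchingEdges_empty : G.IsMatchingEdges ∅ := by
  simp [IsMatchingEdges]

lemma IsMatchingEdges.subset (hM : G.IsMatchingEdges M) (h : M' ⊆ M) : G.IsMatchingEdges M' :=
  ⟨(coe_subset.2 h).trans hM.1, fun e he f hf => hM.2 e (h he) f (h hf)⟩

lemma IsMatchingEdges.mono (hM : G.IsMatchingEdges M) (h : G ≤ G') : G'.IsMatchingEdges M :=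
  ⟨hM.1.trans (edgeSet_mono h), hM.2⟩

lemma IsMatchingEdges.adj (hM : G.IsMatchingEdges M) (h : s(x, y) ∈ M) : G.Adj x y :=
  hM.1 h

lemma IsMatchingEdges.forall_notMem_of_deleteIncidenceSet
    (hM : (G.deleteIncidenceSet v).IsMatchingEdges M) : ∀ f ∈ M, v ∉ f := by
  intro f hf hv
  induction f with
  | _ a b =>
    have := deleteIncidenceSet_adj.1 (hM.adj hf)
    rcases Sym2.mem_iff.1 hv with rfl | rfl <;> tauto

lemma IsMatchingEdges.exists_isMatching_edgeSet_eq (hM : G.IsMatchingEdges M) :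
    ∃ M' : G.Subgraph, M'.IsMatching ∧ M'.edgeSet = M := by
  refine ⟨{ verts := {v | ∃ e ∈ M, v ∈ e}
            Adj := fun a b => s(a, b) ∈ M
            adj_sub := fun h => hM.adj h
            edge_vert := fun h => ⟨_, h, Sym2.mem_mk_left _ _⟩
            symm := ⟨fun a b h => by rwa [Sym2.eq_swap]⟩ }, ?_, ?_⟩
  · rintro v ⟨e, he, hve⟩
    obtain ⟨w, rfl⟩ := Sym2.mem_iff_exists.1 hve
    exact ⟨w, he, fun y hy =>
      Sym2.congr_right.1 (hM.2 _ hy _ he v (Sym2.mem_mk_left _ _) (Sym2.mem_mk_left _ _))⟩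
  · ext e
    induction e with
    | _ a b => rfl

section Fintype

variable [Fintype V]

open Classical in
noncomputable def matchingNumber (G : SimpleGraph V) : ℕ :=
  ({M | G.IsMatchingEdges M} : Finset (Finset (Sym2 V))).sup card

lemma IsMatchingEdges.card_le_matchingNumber (hM : G.IsMatchingEdges M) :
    #M ≤ G.matchingNumber := by
  classical
  exact le_sup (f := card) (mem_filter.2 ⟨mem_univ M, hM⟩)

lemma exists_isMatchingEdges_card_eq_matchingNumber (G : SimpleGraph V) :
    ∃ M, G.IsMatchingEdges M ∧ #M = G.matchingNumber := by
  classical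
  obtain ⟨M, hM, hcard⟩ := exists_mem_eq_sup ({M | G.IsMatchingEdges M} : Finset _)
    ⟨∅, mem_filter.2 ⟨mem_univ _, isMatchingEdges_empty⟩⟩ card
  exact ⟨M, (mem_filter.1 hM).2, by rw [matchingNumber, hcard]⟩

lemma matchingNumber_mono (h : G ≤ G') : G.matchingNumber ≤ G'.matchingNumber := by
  obtain ⟨M, hM, hcard⟩ := G.exists_isMatchingEdges_card_eq_matchingNumber
  exact hcard ▸ (hM.mono h).card_le_matchingNumber

lemma edgeSet_eq_empty_of_matchingNumber_eq_zero (h : G.matchingNumber = 0) : G.edgeSet = ∅ := by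
  refine Set.eq_empty_of_forall_notMem fun e he => ?_
  have := (show G.IsMatchingEdges {e} by simpa [IsMatchingEdges]).card_le_matchingNumber
  simp_all

lemma degree_lt_card_of_support_subset [DecidableRel G.Adj] {S : Finset V}
    (hS : G.support ⊆ S) (hv : v ∈ S) : G.degree v < #S := by
  rw [← card_neighborFinset_eq_degree]
  refine card_lt_card ⟨fun w hw => hS ⟨v, ((mem_neighborFinset _ _ _).1 hw).symm⟩, fun h => ?_⟩
  simpa using h hv

end Fintype

section DecidableEq

variable [DecidableEq V]

lemma IsMatchingEdges.insert_mk (hM : G.IsMatchingEdges M) (h : G.Adj u w)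
    (hu : ∀ f ∈ M, u ∉ f) (hw : ∀ f ∈ M, w ∉ f) : G.IsMatchingEdges (insert s(u, w) M) := by
  refine ⟨by simpa [Set.insert_subset_iff] using ⟨h, hM.1⟩, ?_⟩
  have hfree : ∀ v ∈ s(u, w), ∀ f ∈ M, v ∉ f := by
    rintro v hv f hf
    rcases Sym2.mem_iff.1 hv with rfl | rfl
    exacts [hu f hf, hw f hf]
  simp only [mem_insert]
  rintro e (rfl | he) f (rfl | hf) v hve hvf
  · rfl
  · exact absurd hvf (hfree v hve f hf)
  · exact absurd hve (hfree v hvf e he)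
  · exact hM.2 e he f hf v hve hvf

lemma card_insert_mk_of_forall_notMem (hu : ∀ f ∈ M, u ∉ f) : #(insert s(u, w) M) = #M + 1 :=
  card_insert_of_notMem fun h => hu _ h (Sym2.mem_mk_left u w)

lemma card_biUnion_toFinset_le (M : Finset (Sym2 V)) : #(M.biUnion Sym2.toFinset) ≤ 2 * #M := by
  calc #(M.biUnion Sym2.toFinset) ≤ ∑ e ∈ M, #e.toFinset := card_biUnion_le
    _ ≤ ∑ _e ∈ M, 2 := sum_le_sum fun e _ => by rw [Sym2.card_toFinset]; split_ifs <;> omega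
    _ = 2 * #M := by rw [sum_const, smul_eq_mul, mul_comm]

lemma support_deleteIncidenceSet_subset_erase {S : Finset V} (hS : G.support ⊆ S) (v : V) :
    (G.deleteIncidenceSet v).support ⊆ ↑(S.erase v) := by
  rw [coe_erase]
  exact (G.support_deleteIncidenceSet_subset v).trans (Set.sdiff_subset_sdiff_left hS)

variable [Fintype V]

lemma IsMatchingEdges.card_lt_matchingNumber (hM : G.IsMatchingEdges M) (h : G.Adj u w)
    (hu : ∀ f ∈ M, u ∉ f) (hw : ∀ f ∈ M, w ∉ f) : #M < G.matchingNumber := by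
  have := (hM.insert_mk h hu hw).card_le_matchingNumber
  rw [card_insert_mk_of_forall_notMem hu] at this
  omega

lemma IsMatchingEdges.exists_mem_of_adj (hM : G.IsMatchingEdges M)
    (hmax : G.matchingNumber ≤ #M) (hu : ∀ f ∈ M, u ∉ f) (h : G.Adj u w) : ∃ f ∈ M, w ∈ f := by
  by_contra! hw
  exact (hM.card_lt_matchingNumber h hu hw).not_ge hmax

/-- A maximum matching has no augmenting path `u - x = y - u'` of length three. -/
lemma IsMatchingEdges.not_adj_of_adj (hM : G.IsMatchingEdges M) (hmax : G.matchingNumber ≤ #M)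
    (hu : ∀ f ∈ M, u ∉ f) (hu' : ∀ f ∈ M, u' ∉ f) (huu' : u ≠ u') (hxy : s(x, y) ∈ M)
    (hux : G.Adj u x) : ¬ G.Adj u' y := by
  intro hu'y
  have hfree : ∀ z ∈ s(x, y), ∀ f ∈ M.erase s(x, y), z ∉ f := fun z hz f hf hzf =>
    ne_of_mem_erase hf (hM.2 f (mem_of_mem_erase hf) _ hxy z hzf hz)
  have hu₁ : ∀ f ∈ M.erase s(x, y), u ∉ f := fun f hf => hu f (mem_of_mem_erase hf)
  have hu'₁ : ∀ f ∈ M.erase s(x, y), u' ∉ f := fun f hf => hu' f (mem_of_mem_erase hf)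
  have hM₂ := (hM.subset (erase_subset _ _)).insert_mk hu'y hu'₁
    (hfree y (Sym2.mem_mk_right x y))
  have huy : u ≠ y := fun h => hu _ hxy (h ▸ Sym2.mem_mk_right x y)
  have hxu' : x ≠ u' := fun h => hu' _ hxy (h ▸ Sym2.mem_mk_left x y)
  have hu₂ : ∀ f ∈ insert s(u', y) (M.erase s(x, y)), u ∉ f := by
    simp only [mem_insert, forall_eq_or_imp, Sym2.mem_iff, not_or]
    exact ⟨⟨huu', huy⟩, hu₁⟩
  have hx₂ : ∀ f ∈ insert s(u', y) (M.erase s(x, y)), x ∉ f := by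
    simp only [mem_insert, forall_eq_or_imp, Sym2.mem_iff, not_or]
    exact ⟨⟨hxu', (hM.adj hxy).ne⟩, hfree x (Sym2.mem_mk_left x y)⟩
  have := hM₂.card_lt_matchingNumber hux hu₂ hx₂
  rw [card_insert_mk_of_forall_notMem hu'₁, card_erase_of_mem hxy] at this
  have := card_pos.2 ⟨_, hxy⟩
  omega

lemma matchingNumber_deleteIncidenceSet_deleteIncidenceSet_lt (h : G.Adj u w) :
    ((G.deleteIncidenceSet u).deleteIncidenceSet w).matchingNumber < G.matchingNumber := by
  obtain ⟨M, hM, hcard⟩ :=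
    ((G.deleteIncidenceSet u).deleteIncidenceSet w).exists_isMatchingEdges_card_eq_matchingNumber
  have hM' := hM.mono (deleteIncidenceSet_le _ w)
  rw [← hcard]
  exact (hM'.mono (G.deleteIncidenceSet_le u)).card_lt_matchingNumber h
    hM'.forall_notMem_of_deleteIncidenceSet hM.forall_notMem_of_deleteIncidenceSet

variable [DecidableRel G.Adj]

lemma IsMatchingEdges.degree_le_sum_card_filter (hM : G.IsMatchingEdges M)
    (hmax : G.matchingNumber ≤ #M) (hu : ∀ f ∈ M, u ∉ f) :
    G.degree u ≤ ∑ f ∈ M, #{w ∈ f.toFinset | G.Adj u w} := by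
  rw [← card_neighborFinset_eq_degree]
  refine (card_le_card fun w hw => ?_).trans card_biUnion_le
  have huw := (mem_neighborFinset _ _ _).1 hw
  obtain ⟨f, hf, hwf⟩ := hM.exists_mem_of_adj hmax hu huw
  exact mem_biUnion.2 ⟨f, hf, mem_filter.2 ⟨Sym2.mem_toFinset.2 hwf, huw⟩⟩

lemma IsMatchingEdges.card_filter_adj_add_card_filter_adj_le (hM : G.IsMatchingEdges M)
    (hmax : G.matchingNumber ≤ #M) (hu : ∀ f ∈ M, u ∉ f) (hu' : ∀ f ∈ M, u' ∉ f)
    (huu' : u ≠ u') {f : Sym2 V} (hf : f ∈ M) :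
    #{w ∈ f.toFinset | G.Adj u w} + #{w ∈ f.toFinset | G.Adj u' w} ≤ 2 := by
  induction f with
  | _ x y =>
    have hxy := hM.not_adj_of_adj hmax hu hu' huu' hf
    have hyx := hM.not_adj_of_adj hmax hu hu' huu' (Sym2.eq_swap ▸ hf)
    rw [Sym2.toFinset_mk_eq, card_filter, card_filter, sum_pair (hM.adj hf).ne,
      sum_pair (hM.adj hf).ne]
    split_ifs <;> simp_all

lemma IsMatchingEdges.degree_add_degree_le (hM : G.IsMatchingEdges M)
    (hmax : G.matchingNumber ≤ #M) (hu : ∀ f ∈ M, u ∉ f) (hu' : ∀ f ∈ M, u' ∉ f)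
    (huu' : u ≠ u') : G.degree u + G.degree u' ≤ 2 * #M :=
  calc G.degree u + G.degree u'
      ≤ ∑ f ∈ M, (#{w ∈ f.toFinset | G.Adj u w} + #{w ∈ f.toFinset | G.Adj u' w}) := by
        rw [sum_add_distrib]
        exact add_le_add (hM.degree_le_sum_card_filter hmax hu)
          (hM.degree_le_sum_card_filter hmax hu')
    _ ≤ ∑ _f ∈ M, 2 :=
        sum_le_sum fun f hf => hM.card_filter_adj_add_card_filter_adj_le hmax hu hu' huu' hf
    _ = 2 * #M := by rw [sum_const, smul_eq_mul, mul_comm]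

lemma matchingNumber_deleteIncidenceSet_lt
    (h : 2 * (G.deleteIncidenceSet v).matchingNumber < G.degree v) :
    (G.deleteIncidenceSet v).matchingNumber < G.matchingNumber := by
  obtain ⟨M, hM, hcard⟩ := (G.deleteIncidenceSet v).exists_isMatchingEdges_card_eq_matchingNumber
  have hlt : #(M.biUnion Sym2.toFinset) < #(G.neighborFinset v) := by
    rw [card_neighborFinset_eq_degree]
    exact (card_biUnion_toFinset_le M).trans_lt (hcard ▸ h)
  obtain ⟨w, hw, hwM⟩ := exists_mem_notMem_of_card_lt_card hlt
  rw [← hcard]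
  exact (hM.mono (G.deleteIncidenceSet_le v)).card_lt_matchingNumber
    ((mem_neighborFinset _ _ _).1 hw) hM.forall_notMem_of_deleteIncidenceSet
    fun f hf hwf => hwM (mem_biUnion.2 ⟨f, hf, Sym2.mem_toFinset.2 hwf⟩)

lemma exists_adj_degree_le_matchingNumber
    (h : 2 * G.matchingNumber + 2 ≤ #G.support.toFinset) :
    ∃ z w, G.Adj z w ∧ G.degree z ≤ G.matchingNumber := by
  obtain ⟨M, hM, hcard⟩ := G.exists_isMatchingEdges_card_eq_matchingNumber
  set U := G.support.toFinset \ M.biUnion Sym2.toFinset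
  have hU : 1 < #U := by
    have : #G.support.toFinset - #(M.biUnion Sym2.toFinset) ≤ #U := le_card_sdiff _ _
    have := card_biUnion_toFinset_le M
    omega
  have hunmatched : ∀ z ∈ U, ∀ f ∈ M, z ∉ f :=
    fun z hz f hf hzf => (mem_sdiff.1 hz).2 (mem_biUnion.2 ⟨f, hf, Sym2.mem_toFinset.2 hzf⟩)
  have hsupport : ∀ z ∈ U, ∃ w, G.Adj z w :=
    fun z hz => G.mem_support.1 (Set.mem_toFinset.1 (mem_sdiff.1 hz).1)
  obtain ⟨u, hu, u', hu', huu'⟩ := one_lt_card.1 hU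
  have := hM.degree_add_degree_le hcard.ge (hunmatched u hu) (hunmatched u' hu') huu'
  rcases le_total (G.degree u) (G.degree u') with hle | hle
  · obtain ⟨w, hw⟩ := hsupport u hu
    exact ⟨u, w, hw, by omega⟩
  · obtain ⟨w, hw⟩ := hsupport u' hu'
    exact ⟨u', w, hw, by omega⟩

lemma card_edgeFinset_le_choose_two_of_support_subset {S : Finset V} (hS : G.support ⊆ S) :
    #G.edgeFinset ≤ (#S).choose 2 := by
  rw [← Sym2.card_image_offDiag]
  refine card_le_card fun e he => ?_
  induction e with
  | _ a b =>
    have hab : G.Adj a b := by simpa using he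
    exact mem_image.2 ⟨(a, b), mem_offDiag.2 ⟨hS ⟨b, hab⟩, hS ⟨a, hab.symm⟩, hab.ne⟩, rfl⟩

lemma card_edgeFinset_deleteIncidenceSet_add_degree (v : V) :
    #(G.deleteIncidenceSet v).edgeFinset + G.degree v = #G.edgeFinset := by
  rw [card_edgeFinset_deleteIncidenceSet]
  have := G.degree_le_card_edgeFinset v
  omega

end DecidableEq

/-- The Erdős–Gallai bound; its two terms are the edge counts of `K_{2m+1}` and of `m` vertices
joined to all `n` vertices. -/
def erdosGallaiBound (m n : ℕ) : ℕ := max ((2 * m + 1).choose 2) (m.choose 2 + m * (n - m))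

lemma cast_erdosGallaiBound {m n : ℕ} (h : m ≤ n) :
    (erdosGallaiBound m n : ℝ) = max ((2 * (m : ℝ) + 1) * m) (m * (m - 1) / 2 + m * (n - m)) := by
  rw [erdosGallaiBound, Nat.cast_max, Nat.cast_add, Nat.cast_mul, Nat.cast_choose_two,
    Nat.cast_choose_two, Nat.cast_sub h]
  push_cast
  ring_nf

lemma erdosGallaiBound_add_sub_one_le {m n : ℕ} (h : 2 * m + 4 ≤ n) :
    erdosGallaiBound m (n - 1) + (n - 1) ≤ erdosGallaiBound (m + 1) n := by
  rw [← Nat.cast_le (α := ℝ), Nat.cast_add, cast_erdosGallaiBound (by omega),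
    cast_erdosGallaiBound (by omega), Nat.cast_sub (by omega), ← max_add_add_right]
  have hn : (2 * m + 4 : ℝ) ≤ n := by exact_mod_cast h
  push_cast
  refine max_le ?_ (le_max_of_le_right (by linarith))
  rcases le_total (n : ℝ) (4 * m + 4) with h' | h'
  · exact le_max_of_le_left (by nlinarith)
  · exact le_max_of_le_right (by nlinarith)

lemma erdosGallaiBound_add_le {m n : ℕ} (h : 2 * m + 4 ≤ n) :
    erdosGallaiBound m (n - 2) + (3 * m + 3) ≤ erdosGallaiBound (m + 1) n := by
  rw [← Nat.cast_le (α := ℝ), Nat.cast_add, cast_erdosGallaiBound (by omega),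
    cast_erdosGallaiBound (by omega), Nat.cast_sub (by omega), ← max_add_add_right]
  have hn : (2 * m + 4 : ℝ) ≤ n := by exact_mod_cast h
  push_cast
  exact max_le (le_max_of_le_left (by nlinarith)) (le_max_of_le_right (by nlinarith))

theorem card_edgeFinset_le_erdosGallaiBound [Fintype V] [DecidableEq V] [DecidableRel G.Adj]
    {m : ℕ} {S : Finset V} (hS : G.support ⊆ S) (hm : G.matchingNumber ≤ m) :
    #G.edgeFinset ≤ erdosGallaiBound m #S := by
  induction m generalizing G S with
  | zero =>
    have : G.edgeFinset = ∅ := by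
      simpa using edgeSet_eq_empty_of_matchingNumber_eq_zero (Nat.le_zero.1 hm)
    simp [this]
  | succ m ih =>
    by_cases hsmall : #G.support.toFinset ≤ 2 * m + 3
    · calc #G.edgeFinset ≤ (#G.support.toFinset).choose 2 :=
            card_edgeFinset_le_choose_two_of_support_subset (by simp)
        _ ≤ (2 * (m + 1) + 1).choose 2 := Nat.choose_le_choose 2 (by omega)
        _ ≤ erdosGallaiBound (m + 1) #S := le_max_left _ _
    have hn : 2 * m + 4 ≤ #S := by
      have := card_le_card (show G.support.toFinset ⊆ S by simpa using hS)
      omega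
    by_cases hbig : ∃ v, 2 * m + 3 ≤ G.degree v
    · obtain ⟨v, hv⟩ := hbig
      have hvS : v ∈ S := hS (G.degree_pos_iff_exists_adj v |>.1 (by omega))
      have hm' : (G.deleteIncidenceSet v).matchingNumber ≤ m := by
        by_contra! h
        have := matchingNumber_mono (G.deleteIncidenceSet_le v)
        have := matchingNumber_deleteIncidenceSet_lt (G := G) (v := v) (by omega)
        omega
      have hIH := ih (support_deleteIncidenceSet_subset_erase hS v) hm'
      rw [card_erase_of_mem hvS] at hIH
      have := degree_lt_card_of_support_subset hS hvS
      have := erdosGallaiBound_add_sub_one_le hn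
      rw [← card_edgeFinset_deleteIncidenceSet_add_degree v]
      omega
    · simp only [not_exists, not_le] at hbig
      obtain ⟨z, w, hzw, hz⟩ := exists_adj_degree_le_matchingNumber (G := G) (by omega)
      have hm'' : ((G.deleteIncidenceSet z).deleteIncidenceSet w).matchingNumber ≤ m := by
        have := matchingNumber_deleteIncidenceSet_deleteIncidenceSet_lt hzw
        omega
      have hIH := ih (support_deleteIncidenceSet_subset_erase
        (support_deleteIncidenceSet_subset_erase hS z) w) hm''
      rw [card_erase_of_mem (mem_erase.2 ⟨hzw.ne.symm, hS ⟨z, hzw.symm⟩⟩),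
        card_erase_of_mem (hS ⟨w, hzw⟩), Nat.sub_sub, one_add_one_eq_two] at hIH
      have : (G.deleteIncidenceSet z).degree w ≤ G.degree w :=
        degree_le_of_le (G.deleteIncidenceSet_le z)
      have := hbig w
      have := erdosGallaiBound_add_le hn
      rw [← card_edgeFinset_deleteIncidenceSet_add_degree z,
        ← card_edgeFinset_deleteIncidenceSet_add_degree (G := G.deleteIncidenceSet z) w]
      omega

lemma erdosGallaiBound_pred_lt {k t N : ℕ} (htk : t ≤ k.choose 2) (hN : 1 ≤ N)
    (hμ : (N : ℝ) ≤ min (√((t : ℝ) / (k.choose 2 : ℕ)) / 2)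
      (1 - √(1 - (t : ℝ) / (k.choose 2 : ℕ))) * k) :
    erdosGallaiBound (N - 1) k < t := by
  set C : ℝ := ((k.choose 2 : ℕ) : ℝ)
  set β : ℝ := t / C with hβ
  have hk : (0 : ℝ) ≤ k := k.cast_nonneg
  have hN' : (1 : ℝ) ≤ N := by exact_mod_cast hN
  have h1 : 2 * N ≤ √β * k := by
    have := hμ.trans (mul_le_mul_of_nonneg_right (min_le_left _ _) hk)
    linarith
  have h2 : √(1 - β) * k ≤ k - N := by
    have := hμ.trans (mul_le_mul_of_nonneg_right (min_le_right _ _) hk)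
    linarith
  have hβ0 : 0 < β := by
    by_contra! h
    rw [Real.sqrt_eq_zero'.2 h] at h1
    linarith
  have hC : 0 < C := ((div_pos_iff.1 hβ0).resolve_right fun h => t.cast_nonneg.not_gt h.1).2
  have hβ1 : β ≤ 1 := div_le_one_of_le₀ (Nat.cast_le.2 htk) hC.le
  have ht : (t : ℝ) = β * (k * (k - 1) / 2) := by
    rw [hβ, ← Nat.cast_choose_two, div_mul_cancel₀ _ hC.ne']
  have hsq1 : 4 * N ^ 2 ≤ β * k ^ 2 := by
    have := pow_le_pow_left₀ (by positivity) h1 2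
    rw [mul_pow, mul_pow, Real.sq_sqrt hβ0.le] at this
    linarith
  have hsq2 : (1 - β) * k ^ 2 ≤ (k - N) ^ 2 := by
    have := pow_le_pow_left₀ (by positivity) h2 2
    rwa [mul_pow, Real.sq_sqrt (by linarith)] at this
  have hNk : 2 * (N : ℝ) ≤ k := by nlinarith
  have hNk' : 2 * N ≤ k := by exact_mod_cast hNk
  rw [← Nat.cast_lt (α := ℝ), cast_erdosGallaiBound (by omega), Nat.cast_sub hN, ht]
  push_cast
  refine max_lt (by nlinarith) (by nlinarith)

end SimpleGraph

theorem matching_lower_bound_general {V : Type} [Fintype V] (k t : ℕ)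
    (hV : Fintype.card V = k) (H : SimpleGraph V) (hedges : H.edgeSet.ncard = t) :
    ∃ M : H.Subgraph, M.IsMatching ∧
      ⌊min (Real.sqrt ((t : ℝ) / (k.choose 2 : ℕ)) / 2)
          (1 - Real.sqrt (1 - (t : ℝ) / (k.choose 2 : ℕ))) * k⌋₊ ≤ M.edgeSet.ncard := by
  classical
  obtain ⟨M, hM, hcard⟩ := H.exists_isMatchingEdges_card_eq_matchingNumber
  obtain ⟨M', hM', hedge⟩ := hM.exists_isMatching_edgeSet_eq
  refine ⟨M', hM', ?_⟩
  rw [hedge, Set.ncard_coe_finset, hcard]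
  by_contra! hlt
  have ht : #H.edgeFinset = t := by
    rw [← hedges, ← SimpleGraph.coe_edgeFinset, Set.ncard_coe_finset]
  have hN := Nat.one_le_of_lt hlt
  have hEG := H.card_edgeFinset_le_erdosGallaiBound (S := univ) (by simp)
    (Nat.le_sub_one_of_lt hlt)
  rw [card_univ, hV, ht] at hEG
  refine (SimpleGraph.erdosGallaiBound_pred_lt ?_ hN ?_).not_ge hEG
  · exact ht ▸ hV ▸ H.card_edgeFinset_le_card_choose_two
  · exact Nat.floor_le (zero_le_one.trans (Nat.floor_pos.1 hN))

/-- Every graph `H` on `k` vertices with `t ≥ 1` edges contains a matching of size at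
least `⌊min {√β / 2, 1 - √(1-β)} * k⌋`, where `β = t / C(k,2)`. -/
theorem matching_lower_bound {V : Type} [Fintype V] (k t : ℕ) (ht : 1 ≤ t)
    (hV : Fintype.card V = k) (H : SimpleGraph V) (hedges : H.edgeSet.ncard = t) :
    ∃ M : H.Subgraph, M.IsMatching ∧
      ⌊min (Real.sqrt ((t : ℝ) / (k.choose 2 : ℕ)) / 2)
          (1 - Real.sqrt (1 - (t : ℝ) / (k.choose 2 : ℕ))) * k⌋₊ ≤ M.edgeSet.ncard :=
  matching_lower_bound_general k t hV H hedges
end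

section
/- For every k and 0 < β ≤ 1 with β·C(k,2) an integer, there exists a graph on k vertices with exactly β·C(k,2) edges whose maximum matching has size at most ⌊min{√β/2, 1 − √(1−β)}·k⌋ + 1. -/
/-!
If `C(n-1,2) < t ≤ C(n,2)`, put the `t` edges inside a clique on `n` vertices: a matching then
covers at most `n` vertices, and `C(n-1,2) < β C(k,2)` forces `n - 1 ≤ √β k + 1`.
If `C(k,2) - C(k-u,2) < t ≤ C(k,2) - C(k-u-1,2)`, put them among the edges meeting a fixed set
of `u + 1` vertices, i.e. in the complement of a clique on the other `k - u - 1` vertices: that set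
is a vertex cover, so a matching has at most `u + 1` edges, and `(1-β) C(k,2) < C(k-u,2)` forces
`k - u ≥ √(1-β) k`. The better of the two constructions gives the bound with the minimum.
-/

theorem Nat.exists_lt_le_succ_of_lt_of_le {f : ℕ → ℕ} {t N : ℕ} (h0 : f 0 < t)
    (hN : t ≤ f N) : ∃ n < N, f n < t ∧ t ≤ f (n + 1) := by
  classical
  have hex : ∃ n, t ≤ f n := ⟨N, hN⟩
  obtain ⟨n, hn⟩ : ∃ n, Nat.find hex = n + 1 :=
    Nat.exists_eq_succ_of_ne_zero fun h => (h ▸ Nat.find_spec hex).not_gt h0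
  refine ⟨n, ?_, not_le.mp (Nat.find_min hex (by omega)), hn ▸ Nat.find_spec hex⟩
  have := Nat.find_min' hex hN
  omega

section OrderedField

variable {K : Type*} [Field K] [LinearOrder K] [IsStrictOrderedRing K]

theorem Nat.le_floor_add_one_of_le [FloorSemiring K] {n : ℕ} {x : K} (h : (n : K) ≤ x + 1) :
    n ≤ ⌊x⌋₊ + 1 := by
  have : (n : K) < (⌊x⌋₊ + 1 : ℕ) + 1 := by push_cast; linarith [Nat.lt_floor_add_one x]
  exact Nat.lt_add_one_iff.mp (by exact_mod_cast this)

theorem cast_le_mul_add_one_of_choose_two_lt {m k : ℕ} {s : K} (hs : 0 ≤ s)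
    (h : (m.choose 2 : K) < s ^ 2 * k.choose 2) : (m : K) ≤ s * k + 1 := by
  rw [Nat.cast_choose_two, Nat.cast_choose_two] at h
  by_contra! hm
  have hsk : 0 ≤ s * k := by positivity
  have hsq : s * k * (s * k) < m * (m - 1) := mul_lt_mul'' (by linarith) (by linarith) hsk hsk
  nlinarith [mul_nonneg (sq_nonneg s) (Nat.cast_nonneg k : (0 : K) ≤ k)]

theorem mul_le_cast_of_sq_mul_choose_two_lt {a k : ℕ} {s : K} (hs0 : 0 ≤ s) (hs1 : s ≤ 1)
    (h : s ^ 2 * k.choose 2 < a.choose 2) : s * k ≤ a := by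
  have hk : (0 : K) ≤ k.choose 2 := Nat.cast_nonneg _
  rw [Nat.cast_choose_two, Nat.cast_choose_two] at h
  rw [Nat.cast_choose_two] at hk
  by_contra! ha
  rcases Nat.eq_zero_or_pos a with rfl | ha1
  · simp only [CharP.cast_eq_zero, zero_sub, mul_neg, mul_one, neg_zero, zero_div] at h
    nlinarith
  have ha1 : (1 : K) ≤ a := by exact_mod_cast ha1
  nlinarith [mul_le_mul_of_nonneg_left hs1 (by positivity : (0 : K) ≤ s * k)]

end OrderedField

namespace SimpleGraph

variable {V : Type*}

theorem ncard_edgeSet_top : (⊤ : SimpleGraph V).edgeSet.ncard = (Nat.card V).choose 2 := by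
  rw [edgeSet_top, Sym2.ncard_diagSet_compl]

theorem ncard_edgeSet_spanningCoe_top (s : Set V) :
    (⊤ : SimpleGraph s).spanningCoe.edgeSet.ncard = s.ncard.choose 2 := by
  rw [edgeSet_map, Set.ncard_image_of_injective _ (Function.Embedding.sym2Map _).injective,
    ncard_edgeSet_top, Nat.card_coe_set_eq]

theorem exists_le_ncard_edgeSet_eq (G : SimpleGraph V) {t : ℕ}
    (ht : t ≤ G.edgeSet.ncard) : ∃ H ≤ G, H.edgeSet.ncard = t := by
  obtain ⟨E, hE, hEt⟩ := Set.exists_subset_card_eq ht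
  refine ⟨G.deleteEdges (G.edgeSet \ E), deleteEdges_le _, ?_⟩
  rwa [edgeSet_deleteEdges, Set.sdiff_sdiff_cancel_left hE]

namespace Subgraph

variable {G : SimpleGraph V} {M : G.Subgraph}

theorem IsMatching.ncard_edgeSet_le_of_isVertexCover (hM : M.IsMatching) {c : Set V}
    (hc : G.IsVertexCover c) (hcf : c.Finite) : M.edgeSet.ncard ≤ c.ncard := by
  classical
  let f : V → Sym2 V := fun v => if hv : v ∈ M.verts then hM.toEdge ⟨v, hv⟩ else s(v, v)
  have hf {u v : V} (huv : M.Adj u v) : f u = s(u, v) := by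
    simp [f, huv.fst_mem, hM.toEdge_eq_of_adj huv]
  have hsub : M.edgeSet ⊆ f '' c := by
    rintro ⟨u, v⟩ (huv : M.Adj u v)
    rcases hc (M.adj_sub huv) with hu | hv
    · exact ⟨u, hu, hf huv⟩
    · exact ⟨v, hv, (hf huv.symm).trans Sym2.eq_swap⟩
  exact (Set.ncard_le_ncard hsub (hcf.image f)).trans (Set.ncard_image_le hcf)

theorem IsMatching.ncard_verts [Finite V] (hM : M.IsMatching) :
    M.verts.ncard = 2 * M.edgeSet.ncard := by
  have hfiber (e : M.edgeSet) : Nat.card {v // hM.toEdge v = e} = 2 := by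
    obtain ⟨e, he⟩ := e
    induction e with
    | _ u v =>
      change Nat.card (hM.toEdge ⁻¹' {_}) = 2
      rw [hM.toEdge_preimage_singleton he, Nat.card_coe_set_eq, Set.ncard_pair]
      simpa using he.ne
  have := Fintype.ofFinite M.edgeSet
  rw [← Nat.card_coe_set_eq, ← Nat.card_congr (Equiv.sigmaFiberEquiv hM.toEdge),
    Nat.card_sigma]
  simp only [hfiber, Finset.sum_const, Finset.card_univ, Set.fintypeCard_eq_ncard, smul_eq_mul,
    mul_comm]

end Subgraph

variable [Finite V]

theorem ncard_edgeSet_compl (G : SimpleGraph V) :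
    Gᶜ.edgeSet.ncard = (Nat.card V).choose 2 - G.edgeSet.ncard := by
  rw [← ncard_edgeSet_top, ← sup_compl_eq_top (x := G), edgeSet_sup,
    Set.ncard_union_eq (disjoint_edgeSet.mpr disjoint_compl_right), Nat.add_sub_cancel_left]

theorem exists_ncard_edgeSet_eq_forall_isMatching_two_mul_le {n t : ℕ} (hn : n ≤ Nat.card V)
    (ht : t ≤ n.choose 2) :
    ∃ H : SimpleGraph V, H.edgeSet.ncard = t ∧
      ∀ M : H.Subgraph, M.IsMatching → 2 * M.edgeSet.ncard ≤ n := by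
  obtain ⟨s, -, hs⟩ := Set.exists_subset_card_eq (s := Set.univ) (n := n) (by rwa [Set.ncard_univ])
  obtain ⟨H, hHK, hH⟩ := (⊤ : SimpleGraph s).spanningCoe.exists_le_ncard_edgeSet_eq (t := t)
    (by rwa [ncard_edgeSet_spanningCoe_top, hs])
  refine ⟨H, hH, fun M hM => ?_⟩
  have hverts : M.verts ⊆ s := calc
    M.verts = M.support := hM.support_eq_verts.symm
    _ ⊆ H.support := fun v ⟨w, hvw⟩ => ⟨w, M.adj_sub hvw⟩
    _ ⊆ (⊤ : SimpleGraph s).spanningCoe.support := support_mono hHK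
    _ ⊆ s := by simp [support_spanningCoe]
  rw [← hM.ncard_verts, ← hs]
  exact Set.ncard_le_ncard hverts

theorem exists_ncard_edgeSet_eq_forall_isMatching_le {n t : ℕ} (hn : n ≤ Nat.card V)
    (ht : t ≤ (Nat.card V).choose 2 - (Nat.card V - n).choose 2) :
    ∃ H : SimpleGraph V, H.edgeSet.ncard = t ∧
      ∀ M : H.Subgraph, M.IsMatching → M.edgeSet.ncard ≤ n := by
  obtain ⟨s, -, hs⟩ := Set.exists_subset_card_eq (s := Set.univ) (n := n) (by rwa [Set.ncard_univ])
  set K := (⊤ : SimpleGraph ↥sᶜ).spanningCoeᶜ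
  have hK : K.edgeSet.ncard = (Nat.card V).choose 2 - (Nat.card V - n).choose 2 := by
    rw [ncard_edgeSet_compl, ncard_edgeSet_spanningCoe_top, Set.ncard_compl, hs]
  have hcover : K.IsVertexCover s := by
    intro v w hvw
    rw [compl_adj] at hvw
    by_contra! h
    exact hvw.2 (by simpa [h.1, h.2] using hvw.1)
  obtain ⟨H, hHK, hH⟩ := K.exists_le_ncard_edgeSet_eq (hK ▸ ht)
  exact ⟨H, hH, fun M hM => hs ▸ hM.ncard_edgeSet_le_of_isVertexCover (hcover.mono hHK) s.toFinite⟩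

variable {t : ℕ} {β : ℝ}

theorem exists_ncard_edgeSet_eq_forall_isMatching_le_floor_sqrt_mul (hβ : 0 ≤ β)
    (ht : (t : ℝ) = β * (Nat.card V).choose 2) (ht0 : 0 < t) (htV : t ≤ (Nat.card V).choose 2) :
    ∃ H : SimpleGraph V, H.edgeSet.ncard = t ∧
      ∀ M : H.Subgraph, M.IsMatching → M.edgeSet.ncard ≤ ⌊√β / 2 * Nat.card V⌋₊ + 1 := by
  obtain ⟨m, hmV, hmt, htm⟩ :=
    Nat.exists_lt_le_succ_of_lt_of_le (f := (·.choose 2)) (by simpa) htV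
  obtain ⟨H, hH, hmatch⟩ := exists_ncard_edgeSet_eq_forall_isMatching_two_mul_le hmV htm
  refine ⟨H, hH, fun M hM => Nat.le_floor_add_one_of_le ?_⟩
  have hm : (m : ℝ) ≤ √β * Nat.card V + 1 := cast_le_mul_add_one_of_choose_two_lt
    (Real.sqrt_nonneg β) (by rw [Real.sq_sqrt hβ, ← ht]; exact_mod_cast hmt)
  have h2M : (2 * M.edgeSet.ncard : ℝ) ≤ m + 1 := by exact_mod_cast hmatch M hM
  linarith

theorem exists_ncard_edgeSet_eq_forall_isMatching_le_floor_one_sub_sqrt_mul (hβ0 : 0 ≤ β)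
    (hβ1 : β ≤ 1) (ht : (t : ℝ) = β * (Nat.card V).choose 2) (ht0 : 0 < t)
    (htV : t ≤ (Nat.card V).choose 2) :
    ∃ H : SimpleGraph V, H.edgeSet.ncard = t ∧
      ∀ M : H.Subgraph, M.IsMatching → M.edgeSet.ncard ≤ ⌊(1 - √(1 - β)) * Nat.card V⌋₊ + 1 := by
  set k := Nat.card V
  obtain ⟨u, huk, hut, htu⟩ := Nat.exists_lt_le_succ_of_lt_of_le
    (f := fun u => k.choose 2 - (k - u).choose 2) (N := k) (by simpa) (by simpa)
  obtain ⟨H, hH, hmatch⟩ := exists_ncard_edgeSet_eq_forall_isMatching_le huk htu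
  refine ⟨H, hH, fun M hM => Nat.le_floor_add_one_of_le ?_⟩
  have hu : √(1 - β) * k ≤ (k - u : ℕ) := by
    refine mul_le_cast_of_sq_mul_choose_two_lt (Real.sqrt_nonneg _)
      (Real.sqrt_le_one.mpr (by linarith)) ?_
    have hlt : k.choose 2 < t + (k - u).choose 2 := by omega
    have : ((k.choose 2 : ℕ) : ℝ) < t + (k - u).choose 2 := by exact_mod_cast hlt
    rw [Real.sq_sqrt (by linarith)]
    linarith
  have hM' : (M.edgeSet.ncard : ℝ) ≤ u + 1 := by exact_mod_cast hmatch M hM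
  push_cast [Nat.cast_sub huk.le] at hu
  linarith

end SimpleGraph

/-- For every `k` and `0 < β ≤ 1` with `β * C(k,2)` an integer, there exists a graph on
`k` vertices with exactly `β * C(k,2)` edges whose maximum matching has size at most
`⌊min {√β / 2, 1 - √(1-β)} * k⌋ + 1`. -/
theorem exists_graph_small_matching (k t : ℕ) (β : ℝ) (hβ0 : 0 < β) (hβ1 : β ≤ 1)
    (ht : (t : ℝ) = β * (k.choose 2 : ℕ)) :
    ∃ H : SimpleGraph (Fin k), H.edgeSet.ncard = t ∧
      ∀ M : H.Subgraph, M.IsMatching →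
        M.edgeSet.ncard ≤ ⌊min (Real.sqrt β / 2) (1 - Real.sqrt (1 - β)) * k⌋₊ + 1 := by
  rcases Nat.eq_zero_or_pos t with rfl | ht0
  · exact ⟨⊥, by simp, fun M _ => by
      simp [Set.subset_empty_iff.mp (SimpleGraph.edgeSet_bot (V := Fin k) ▸ M.edgeSet_subset)]⟩
  rw [← Nat.card_fin k] at ht
  have htV : t ≤ (Nat.card (Fin k)).choose 2 := by
    exact_mod_cast ht.trans_le (mul_le_of_le_one_left (Nat.cast_nonneg _) hβ1)
  rcases le_total (√β / 2) (1 - √(1 - β)) with h | h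
  · simpa [min_eq_left h] using
      SimpleGraph.exists_ncard_edgeSet_eq_forall_isMatching_le_floor_sqrt_mul hβ0.le ht ht0 htV
  · simpa [min_eq_right h] using
      SimpleGraph.exists_ncard_edgeSet_eq_forall_isMatching_le_floor_one_sub_sqrt_mul hβ0.le hβ1
        ht ht0 htV
end

section
/- Let 1 ≤ δ < 2, r = 2/(2−δ), ℓ ≥ 2, and s_i = (r^i − 1)/(r^ℓ − 1). For every 1 ≤ i ≤ ℓ−1: 2·((2−δ)√(1−s_i) + δ − 1)/(1 − s_{i−1}) ≤ 2 − δ/(r^ℓ − r^{i−1}) ≤ 2 − δ·r^{−ℓ}. -/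
/-!
Bounding `√(1 - sᵢ)` by `1 - sᵢ/2` turns the numerator into `2 - (2 - δ) sᵢ`. Since
`(2 - δ) r = 2`, one has `(2 - δ) sᵢ - 2 sᵢ₋₁ = δ / (r^ℓ - 1)` and `1 - sᵢ₋₁ = (r^ℓ - rⁱ⁻¹)/(r^ℓ - 1)`,
so the quotient equals `2 - δ / (r^ℓ - rⁱ⁻¹)` exactly; the last bound is `r^ℓ - rⁱ⁻¹ ≤ r^ℓ`.
-/

lemma pow_sub_one_div_pow_sub_one_lt_one {r : ℝ} (hr : 1 < r) {i ℓ : ℕ} (hiℓ : i < ℓ) :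
    (r ^ i - 1) / (r ^ ℓ - 1) < 1 := by
  have hpow : r ^ i < r ^ ℓ := pow_lt_pow_right₀ hr hiℓ
  rw [div_lt_one (by linarith [one_le_pow₀ (n := i) hr.le])]
  linarith

lemma two_sub_mul_pow_ratio_div {δ r : ℝ} (hδr : (2 - δ) * r = 2) {j ℓ : ℕ}
    (hℓ : r ^ ℓ - 1 ≠ 0) (hjℓ : r ^ ℓ - r ^ j ≠ 0) :
    (2 - (2 - δ) * ((r ^ (j + 1) - 1) / (r ^ ℓ - 1))) / (1 - (r ^ j - 1) / (r ^ ℓ - 1))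
      = 2 - δ / (r ^ ℓ - r ^ j) := by
  have hden : 1 - (r ^ j - 1) / (r ^ ℓ - 1) = (r ^ ℓ - r ^ j) / (r ^ ℓ - 1) := by
    field_simp; ring
  rw [hden]
  field_simp
  linear_combination -r ^ j * hδr

theorem middle_rounds_bound_general (δ : ℝ) (hδ1 : 1 ≤ δ) (hδ2 : δ < 2) (ℓ : ℕ)
    (r : ℝ) (hr : r = 2 / (2 - δ))
    (s : ℕ → ℝ) (hs : ∀ i, s i = (r ^ i - 1) / (r ^ ℓ - 1)) :
    ∀ i, 1 ≤ i → i ≤ ℓ - 1 →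
      2 * ((2 - δ) * Real.sqrt (1 - s i) + δ - 1) / (1 - s (i - 1))
          ≤ 2 - δ / (r ^ ℓ - r ^ (i - 1)) ∧
      2 - δ / (r ^ ℓ - r ^ (i - 1)) ≤ 2 - δ / r ^ ℓ := by
  rintro i hi1 hiℓ
  obtain ⟨j, rfl⟩ := Nat.exists_eq_add_of_le' hi1
  rw [Nat.add_sub_cancel]
  have hδ : 0 < 2 - δ := by linarith
  have hδr : (2 - δ) * r = 2 := by rw [hr]; field_simp
  have hr1 : 1 < r := by nlinarith
  have hgap : 0 < r ^ ℓ - r ^ j := sub_pos.mpr (pow_lt_pow_right₀ hr1 (by omega))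
  have hsj : s j < 1 := hs j ▸ pow_sub_one_div_pow_sub_one_lt_one hr1 (by omega)
  have hsj1 : s (j + 1) < 1 := hs (j + 1) ▸ pow_sub_one_div_pow_sub_one_lt_one hr1 (by omega)
  have hsqrt : Real.sqrt (1 - s (j + 1)) ≤ 1 - s (j + 1) / 2 := by
    simpa [sub_eq_add_neg, neg_div] using Real.sqrt_one_add_le (x := -s (j + 1)) (by linarith)
  refine ⟨?_, ?_⟩
  · calc 2 * ((2 - δ) * Real.sqrt (1 - s (j + 1)) + δ - 1) / (1 - s j)
        ≤ (2 - (2 - δ) * s (j + 1)) / (1 - s j) := by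
          gcongr ?_ / _
          linarith [mul_le_mul_of_nonneg_left hsqrt hδ.le]
      _ = 2 - δ / (r ^ ℓ - r ^ j) := by
          rw [hs, hs]
          exact two_sub_mul_pow_ratio_div hδr
            (sub_pos.mpr (one_lt_pow₀ hr1 (by omega))).ne' hgap.ne'
  · gcongr 2 - δ / ?_
    exact sub_le_self _ (by positivity)

/-- For `1 ≤ δ < 2`, `r = 2/(2-δ)`, `ℓ ≥ 2`, `s_i = (r^i - 1)/(r^ℓ - 1)`, and every
`1 ≤ i ≤ ℓ-1`:
`2 * ((2-δ)√(1-s_i) + δ - 1)/(1 - s_{i-1}) ≤ 2 - δ/(r^ℓ - r^{i-1}) ≤ 2 - δ * r^{-ℓ}`. -/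
theorem middle_rounds_bound (δ : ℝ) (hδ1 : 1 ≤ δ) (hδ2 : δ < 2) (ℓ : ℕ) (hℓ : 2 ≤ ℓ)
    (r : ℝ) (hr : r = 2 / (2 - δ))
    (s : ℕ → ℝ) (hs : ∀ i, s i = (r ^ i - 1) / (r ^ ℓ - 1)) :
    ∀ i, 1 ≤ i → i ≤ ℓ - 1 →
      2 * ((2 - δ) * Real.sqrt (1 - s i) + δ - 1) / (1 - s (i - 1))
          ≤ 2 - δ / (r ^ ℓ - r ^ (i - 1)) ∧
      2 - δ / (r ^ ℓ - r ^ (i - 1)) ≤ 2 - δ / r ^ ℓ :=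
  middle_rounds_bound_general δ hδ1 hδ2 ℓ r hr s hs
end

section
/- In a graph G on n vertices with m edges and every any k-subset S whose induced subgraph has at least β·C(k,2) edges with β ≤ 16/25, the number of such subsets is at most m^((1−√(1−β))k + 1) · n^((2√(1−β) − 1)k + 2). -/
/-!
Write `β = 1 - s²` with `s = √(1 - β) ≥ 3/5` and `M = ⌊(1 - s) k⌋`. If a `k`-set `S` spans at
least `β · C(k, 2)` edges, then `G[S]` contains a matching with `M` edges, and `S` is determined by
these `M` edges of `G` together with the `k - 2M` other vertices of `S`. So there are at most
`C(m, M) · C(n, k - 2M) ≤ m ^ M · n ^ (k - 2M)` such sets.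

The matching comes from an Erdős–Gallai type bound: if a maximum matching of a graph on `k`
vertices has `ν` edges, the graph has at most `ν · max (2k - ν) (4ν + 5) / 2` edges, which is less
than `(1 - s²) · C(k, 2)` when `ν < (1 - s) k`. The unmatched vertices of a maximum matching are
independent. Call a matching edge strong when one of its endpoints, its apex, has two unmatched
neighbours. Augmenting paths, after exchanging strong edges for edges from their apex to an
unmatched vertex, show that the other endpoint of a strong edge has no unmatched neighbour, that
two such endpoints are not adjacent, and that no matching edge has its two ends adjacent to those
of two different strong edges. Summing degrees over the matched vertices then gives the bound.
-/

open Finset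

lemma Finset.card_add_card_le_card_add_one {α : Type*} [DecidableEq α] {s t B : Finset α}
    (hs : s ⊆ B) (ht : t ⊆ B) (h : ∀ x ∈ s, ∀ y ∈ t, x = y) : #s + #t ≤ #B + 1 := by
  rw [← card_union_add_card_inter]
  exact add_le_add (card_le_card (union_subset hs ht))
    (card_le_one.2 fun x hx y hy => h x (mem_inter.1 hx).1 y (mem_inter.1 hy).2)

lemma mul_max_lt_of_add_one_le {ν k s : ℝ} (hν : 0 ≤ ν) (hk : 0 ≤ k) (hs : 3 / 5 ≤ s)
    (hνk : ν + 1 ≤ (1 - s) * k) :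
    ν * max (2 * k - ν) (4 * ν + 5) < (1 - s ^ 2) * (k * (k - 1)) := by
  set c := (1 - s) * k with hc
  have hs1 : s < 1 := by nlinarith
  have hck : c ≤ k := by nlinarith
  rw [show (1 - s ^ 2) * (k * (k - 1)) = (1 + s) * (k - 1) * c by ring, mul_max_of_nonneg _ _ hν]
  refine max_lt ?_ ?_
  · have h₁ : ν * (2 * k - ν) ≤ (c - 1) * (2 * k - (c - 1)) := by
      nlinarith [mul_nonneg (by linarith : 0 ≤ c - 1 - ν) (by linarith : 0 ≤ 2 * k - (c - 1) - ν)]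
    have h₂ : (c - 1) * (2 * k - (c - 1)) + 1 + (s ^ 2 + 2 * s - 1) * k =
        (1 + s) * (k - 1) * c := by
      rw [hc]; ring
    nlinarith [mul_nonneg (by nlinarith : 0 ≤ s ^ 2 + 2 * s - 1) hk]
  · have h₁ : ν * (4 * ν + 5) ≤ (c - 1) * (4 * c + 1) := by nlinarith
    have h₂ : 4 * c - 2 ≤ (1 + s) * (k - 1) := by rw [hc]; nlinarith
    nlinarith

namespace SimpleGraph

variable {W : Type*} [DecidableEq W]

def endpoints (P : Finset (W × W)) : Finset W := P.biUnion fun p => {p.1, p.2}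

section Endpoints

variable {P Q : Finset (W × W)} {p : W × W} {a b u v : W}

lemma mem_endpoints : v ∈ endpoints P ↔ ∃ p ∈ P, v ∈ ({p.1, p.2} : Finset W) :=
  mem_biUnion

lemma mem_endpoints_of_mem (hp : p ∈ P) (hv : v ∈ ({p.1, p.2} : Finset W)) : v ∈ endpoints P :=
  mem_endpoints.2 ⟨p, hp, hv⟩

lemma endpoints_mono (h : P ⊆ Q) : endpoints P ⊆ endpoints Q :=
  biUnion_subset_biUnion_of_subset_left _ h

lemma endpoints_insert : endpoints (insert p P) = {p.1, p.2} ∪ endpoints P :=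
  biUnion_insert

lemma endpoints_union : endpoints (P ∪ Q) = endpoints P ∪ endpoints Q :=
  union_biUnion

lemma endpoints_map {V : Type*} [DecidableEq V] (f : W ↪ V) (P : Finset (W × W)) :
    endpoints (P.map (f.prodMap f)) = (endpoints P).map f := by
  simp only [endpoints, map_eq_image, image_biUnion, biUnion_image, image_insert, image_singleton]
  rfl

lemma card_insert_of_notMem_endpoints (ha : a ∉ endpoints P) : #(insert (a, b) P) = #P + 1 :=
  card_insert_of_notMem fun h => ha (mem_endpoints_of_mem h (by simp))

lemma notMem_endpoints_swap (hp : p ∈ P) (hv : v ∉ endpoints P) (hvu : v ≠ u) :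
    v ∉ endpoints (insert (p.1, u) (P.erase p)) := by
  simp only [endpoints_insert, mem_union, mem_insert, mem_singleton, not_or]
  exact ⟨⟨fun e => hv (e ▸ mem_endpoints_of_mem hp (by simp)), hvu⟩,
    fun hv' => hv (endpoints_mono (erase_subset p P) hv')⟩

end Endpoints

/-- A matching of `H`, each edge recorded as an ordered pair so that the apex of a strong edge can
be put first. -/
structure IsPairMatching (H : SimpleGraph W) (P : Finset (W × W)) : Prop where
  adj : ∀ p ∈ P, H.Adj p.1 p.2
  pairwiseDisjoint : (P : Set (W × W)).PairwiseDisjoint fun p => ({p.1, p.2} : Finset W)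

structure IsMaxPairMatching (H : SimpleGraph W) (P : Finset (W × W)) : Prop where
  isPairMatching : IsPairMatching H P
  card_le : ∀ Q, IsPairMatching H Q → #Q ≤ #P

variable {H : SimpleGraph W} {P Q : Finset (W × W)} {p q l : W × W} {a b u v : W}

namespace IsPairMatching

lemma eq_of_mem (h : IsPairMatching H P) (hp : p ∈ P) (hq : q ∈ P)
    (hvp : v ∈ ({p.1, p.2} : Finset W)) (hvq : v ∈ ({q.1, q.2} : Finset W)) : p = q := by
  by_contra hne
  exact Finset.disjoint_left.1 (h.pairwiseDisjoint hp hq hne) hvp hvq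

lemma subset (h : IsPairMatching H P) (hQ : Q ⊆ P) : IsPairMatching H Q :=
  ⟨fun p hp => h.adj p (hQ hp), h.pairwiseDisjoint.subset (by simpa using hQ)⟩

lemma card_endpoints (h : IsPairMatching H P) : #(endpoints P) = 2 * #P := by
  rw [endpoints, card_biUnion h.pairwiseDisjoint,
    sum_const_nat fun p hp => card_pair (h.adj p hp).ne, mul_comm]

lemma sum_endpoints {M : Type*} [AddCommMonoid M] (h : IsPairMatching H P) (f : W → M) :
    ∑ v ∈ endpoints P, f v = ∑ p ∈ P, (f p.1 + f p.2) := by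
  rw [endpoints, sum_biUnion h.pairwiseDisjoint]
  exact sum_congr rfl fun p hp => sum_pair (h.adj p hp).ne

lemma insert_pair (h : IsPairMatching H P) (hab : H.Adj a b) (ha : a ∉ endpoints P)
    (hb : b ∉ endpoints P) : IsPairMatching H (insert (a, b) P) := by
  refine ⟨by simpa [hab] using h.adj, ?_⟩
  rw [coe_insert]
  refine h.pairwiseDisjoint.insert fun q hq _ => Finset.disjoint_left.2 fun v hv hvq => ?_
  have hvP := mem_endpoints_of_mem hq hvq
  simp only [mem_insert, mem_singleton] at hv
  rcases hv with rfl | rfl <;> contradiction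

lemma notMem_endpoints_erase (h : IsPairMatching H P) (hp : p ∈ P)
    (hv : v ∈ ({p.1, p.2} : Finset W)) : v ∉ endpoints (P.erase p) := by
  intro hv'
  obtain ⟨q, hq, hvq⟩ := mem_endpoints.1 hv'
  exact (ne_of_mem_erase hq) (h.eq_of_mem (mem_of_mem_erase hq) hp hvq hv)

lemma snd_notMem_endpoints_swap (h : IsPairMatching H P) (hp : p ∈ P) (hu : u ∉ endpoints P) :
    p.2 ∉ endpoints (insert (p.1, u) (P.erase p)) := by
  simp only [endpoints_insert, mem_union, mem_insert, mem_singleton, not_or]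
  exact ⟨⟨(h.adj p hp).ne.symm, fun e => hu (e ▸ mem_endpoints_of_mem hp (by simp))⟩,
    h.notMem_endpoints_erase hp (by simp)⟩

lemma map {V : Type*} [DecidableEq V] {G : SimpleGraph V} (f : H ↪g G) (h : IsPairMatching H P) :
    IsPairMatching G (P.map (f.toEmbedding.prodMap f.toEmbedding)) := by
  refine ⟨fun p hp => ?_, ?_⟩
  · obtain ⟨q, hq, rfl⟩ := mem_map.1 hp
    exact f.map_adj_iff.2 (h.adj q hq)
  rw [coe_map]
  rintro _ ⟨p, hp, rfl⟩ _ ⟨q, hq, rfl⟩ hpq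
  have := (disjoint_map f.toEmbedding).2 (h.pairwiseDisjoint hp hq fun e => hpq (e ▸ rfl))
  simpa [Function.onFun] using this

end IsPairMatching

lemma exists_isMaxPairMatching [Fintype W] (H : SimpleGraph W) : ∃ P, IsMaxPairMatching H P := by
  classical
  obtain ⟨P, hP, hmax⟩ := exists_max_image {P : Finset (W × W) | IsPairMatching H P} card
    ⟨∅, by simpa using (⟨by simp, by simp⟩ : IsPairMatching H ∅)⟩
  exact ⟨P, (mem_filter.1 hP).2, fun Q hQ => hmax Q (by simpa using hQ)⟩

namespace IsMaxPairMatching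

lemma of_card_eq (h : IsMaxPairMatching H P) (hQ : IsPairMatching H Q) (hc : #Q = #P) :
    IsMaxPairMatching H Q :=
  ⟨hQ, fun R hR => hc ▸ h.card_le R hR⟩

lemma exists_orient (h : IsMaxPairMatching H P) (f : W → ℕ) :
    ∃ P', IsMaxPairMatching H P' ∧ endpoints P' = endpoints P ∧ ∀ p ∈ P', f p.2 ≤ f p.1 := by
  set g : W × W → W × W := fun p => if f p.1 < f p.2 then p.swap else p
  have hg : ∀ p, ({(g p).1, (g p).2} : Finset W) = {p.1, p.2} := fun p => by
    simp only [g]; split_ifs <;> simp [pair_comm]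
  have hinj : Set.InjOn g P := fun p hp q hq hpq =>
    h.isPairMatching.eq_of_mem hp hq (v := (g p).1) (hg p ▸ by simp) (hpq ▸ hg q ▸ by simp)
  have hmatch : IsPairMatching H (P.image g) := by
    refine ⟨?_, ?_⟩
    · simp only [mem_image, forall_exists_index, and_imp, forall_apply_eq_imp_iff₂]
      intro p hp
      simp only [g]; split_ifs
      exacts [(h.isPairMatching.adj p hp).symm, h.isPairMatching.adj p hp]
    · rw [coe_image]
      rintro _ ⟨p, hp, rfl⟩ _ ⟨q, hq, rfl⟩ hpq
      simp only [Function.onFun, hg]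
      exact h.isPairMatching.pairwiseDisjoint hp hq fun e => hpq (congrArg g e)
  refine ⟨P.image g, h.of_card_eq hmatch (card_image_of_injOn hinj), ?_, ?_⟩
  · rw [endpoints, endpoints, image_biUnion]
    exact biUnion_congr rfl fun p _ => hg p
  · simp only [mem_image, forall_exists_index, and_imp, forall_apply_eq_imp_iff₂]
    intro p _
    simp only [g]; split_ifs with hlt
    exacts [hlt.le, not_lt.1 hlt]

lemma not_adj (h : IsMaxPairMatching H P) (hu : u ∉ endpoints P) (hv : v ∉ endpoints P) :
    ¬ H.Adj u v := fun huv => by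
  have := h.card_le _ (h.isPairMatching.insert_pair huv hu hv)
  rw [card_insert_of_notMem_endpoints hu] at this
  omega

/-- The augmenting path `u, p.1, p.2, v`. -/
lemma not_adj_and_adj (h : IsMaxPairMatching H P) (hp : p ∈ P) (hu : u ∉ endpoints P)
    (hv : v ∉ endpoints P) (huv : u ≠ v) : ¬ (H.Adj p.1 u ∧ H.Adj p.2 v) := by
  rintro ⟨hpu, hpv⟩
  have hP := h.isPairMatching
  have h₁ : p.1 ∉ endpoints (P.erase p) := hP.notMem_endpoints_erase hp (by simp)
  have h₂ : p.2 ∉ endpoints (P.erase p) := hP.notMem_endpoints_erase hp (by simp)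
  have hu' : u ∉ endpoints (P.erase p) := fun hu' => hu (endpoints_mono (erase_subset p P) hu')
  have hv' : v ∉ endpoints (P.erase p) := fun hv' => hv (endpoints_mono (erase_subset p P) hv')
  have hQ : IsPairMatching H (insert (p.2, v) (P.erase p)) :=
    (hP.subset (erase_subset p P)).insert_pair hpv h₂ hv'
  have hp₁ : p.1 ∉ endpoints (insert (p.2, v) (P.erase p)) := by
    simp only [endpoints_insert, mem_union, mem_insert, mem_singleton, not_or]
    exact ⟨⟨(hP.adj p hp).ne, fun e => hv (e ▸ mem_endpoints_of_mem hp (by simp))⟩, h₁⟩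
  have hu'' : u ∉ endpoints (insert (p.2, v) (P.erase p)) := by
    simp only [endpoints_insert, mem_union, mem_insert, mem_singleton, not_or]
    exact ⟨⟨fun e => hu (e ▸ mem_endpoints_of_mem hp (by simp)), huv⟩, hu'⟩
  have := h.card_le _ (hQ.insert_pair hpu hp₁ hu'')
  rw [card_insert_of_notMem_endpoints hp₁, card_insert_of_notMem_endpoints h₂,
    card_erase_of_mem hp] at this
  have := card_pos.2 ⟨p, hp⟩
  omega

lemma swap (h : IsMaxPairMatching H P) (hp : p ∈ P) (hu : u ∉ endpoints P) (hpu : H.Adj p.1 u) :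
    IsMaxPairMatching H (insert (p.1, u) (P.erase p)) := by
  have hP := h.isPairMatching
  have h₁ : p.1 ∉ endpoints (P.erase p) := hP.notMem_endpoints_erase hp (by simp)
  refine h.of_card_eq ((hP.subset (erase_subset p P)).insert_pair hpu h₁
    fun hu' => hu (endpoints_mono (erase_subset p P) hu')) ?_
  rw [card_insert_of_notMem_endpoints h₁, card_erase_add_one hp]

end IsMaxPairMatching

section Counting

variable [Fintype W] [DecidableRel H.Adj]

lemma two_mul_card_edgeFinset_eq_sum (A : Finset W) (hA : ∀ u ∉ A, ∀ v ∉ A, ¬ H.Adj u v) :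
    2 * #H.edgeFinset = ∑ v ∈ A, (#{w ∈ A | H.Adj v w} + 2 * #{w ∈ Aᶜ | H.Adj v w}) := by
  have hdeg : ∀ v, H.degree v = #{w ∈ A | H.Adj v w} + #{w ∈ Aᶜ | H.Adj v w} := fun v => by
    rw [← card_neighborFinset_eq_degree, neighborFinset_eq_filter, card_filter, card_filter,
      card_filter, sum_add_sum_compl]
  have hout : ∑ v ∈ Aᶜ, H.degree v = ∑ v ∈ A, #{w ∈ Aᶜ | H.Adj v w} := by
    have hA' : ∀ v ∈ Aᶜ, #{w ∈ Aᶜ | H.Adj v w} = 0 := fun v hv =>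
      card_eq_zero.2 (filter_eq_empty_iff.2 fun w hw => hA v (mem_compl.1 hv) w (mem_compl.1 hw))
    rw [sum_congr rfl fun v hv => by rw [hdeg v, hA' v hv, add_zero]]
    simpa [bipartiteAbove, bipartiteBelow, adj_comm] using
      sum_card_bipartiteAbove_eq_sum_card_bipartiteBelow H.Adj (s := Aᶜ) (t := A)
  rw [← sum_degrees_eq_twice_card_edges, ← sum_add_sum_compl A, hout,
    sum_congr rfl fun v _ => hdeg v, ← sum_add_distrib]
  exact sum_congr rfl fun v _ => by ring

variable (H) in
def unmatchedNeighbors (P : Finset (W × W)) (v : W) : Finset W :=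
  {w ∈ (endpoints P)ᶜ | H.Adj v w}

variable (H) in
/-- The degree of `v`, with edges to unmatched vertices counted twice: over the matched vertices
these sum to twice the number of edges, since the unmatched vertices are independent. -/
def chargedDegree (P : Finset (W × W)) (v : W) : ℕ :=
  #{w ∈ endpoints P | H.Adj v w} + 2 * #(unmatchedNeighbors H P v)

variable (H) in
def strongPairs (P : Finset (W × W)) : Finset (W × W) :=
  {p ∈ P | 1 < #(unmatchedNeighbors H P p.1)}

lemma mem_unmatchedNeighbors : u ∈ unmatchedNeighbors H P v ↔ u ∉ endpoints P ∧ H.Adj v u := by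
  simp [unmatchedNeighbors]

lemma IsPairMatching.chargedDegree_add_le_of_notMem_strongPairs (h : IsPairMatching H P)
    (hp : p ∈ P) (hpT : p ∉ strongPairs H P)
    (horient : #(unmatchedNeighbors H P p.2) ≤ #(unmatchedNeighbors H P p.1)) :
    chargedDegree H P p.1 + chargedDegree H P p.2 ≤ 4 * #P + 4 := by
  have hp₁ : #(unmatchedNeighbors H P p.1) ≤ 1 := not_lt.1 fun h₁ => hpT (mem_filter.2 ⟨hp, h₁⟩)
  have h₁ : #{w ∈ endpoints P | H.Adj p.1 w} ≤ 2 * #P :=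
    (card_filter_le _ _).trans h.card_endpoints.le
  have h₂ : #{w ∈ endpoints P | H.Adj p.2 w} ≤ 2 * #P :=
    (card_filter_le _ _).trans h.card_endpoints.le
  simp only [chargedDegree]
  omega

namespace IsMaxPairMatching

lemma unmatchedNeighbors_snd_eq_empty (h : IsMaxPairMatching H P) (hp : p ∈ P)
    (hp₁ : 1 < #(unmatchedNeighbors H P p.1)) : unmatchedNeighbors H P p.2 = ∅ := by
  refine eq_empty_of_forall_notMem fun v hv => ?_
  obtain ⟨u, hu, huv⟩ := exists_mem_ne hp₁ v
  rw [mem_unmatchedNeighbors] at hu hv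
  exact h.not_adj_and_adj hp hu.1 hv.1 huv ⟨hu.2, hv.2⟩

/-- Swapping `p` for `(p.1, u)` frees `p.2`; an edge from `p.2` to `q.2` then gives the augmenting
path `u', q.1, q.2, p.2`. -/
lemma not_adj_snd_snd (h : IsMaxPairMatching H P) (hp : p ∈ P) (hq : q ∈ P) (hpq : p ≠ q)
    (hp₁ : 1 < #(unmatchedNeighbors H P p.1)) (hq₁ : 1 < #(unmatchedNeighbors H P q.1)) :
    ¬ H.Adj p.2 q.2 := fun hpq₂ => by
  obtain ⟨u, hu⟩ := card_pos.1 (zero_lt_one.trans hp₁)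
  obtain ⟨u', hu', hu'u⟩ := exists_mem_ne hq₁ u
  rw [mem_unmatchedNeighbors] at hu hu'
  have hp₂ : p.2 ∈ endpoints P := mem_endpoints_of_mem hp (by simp)
  exact (h.swap hp hu.1 hu.2).not_adj_and_adj (mem_insert_of_mem (mem_erase.2 ⟨hpq.symm, hq⟩))
    (notMem_endpoints_swap hp hu'.1 hu'u) (h.isPairMatching.snd_notMem_endpoints_swap hp hu.1)
    (fun e => hu'.1 (e ▸ hp₂)) ⟨hu'.2, hpq₂.symm⟩

/-- Swapping `p` for `(p.1, u)` and `q` for `(q.1, u')` frees `p.2` and `q.2`, which turns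
`p.2, l.1, l.2, q.2` into an augmenting path. -/
lemma not_adj_snd_fst_and_adj_snd_snd (h : IsMaxPairMatching H P) (hp : p ∈ P) (hq : q ∈ P)
    (hl : l ∈ P) (hpq : p ≠ q) (hlp : l ≠ p) (hlq : l ≠ q)
    (hp₁ : 1 < #(unmatchedNeighbors H P p.1)) (hq₁ : 1 < #(unmatchedNeighbors H P q.1)) :
    ¬ (H.Adj p.2 l.1 ∧ H.Adj q.2 l.2) := by
  rintro ⟨hpl, hql⟩
  obtain ⟨u, hu⟩ := card_pos.1 (zero_lt_one.trans hp₁)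
  obtain ⟨u', hu', hu'u⟩ := exists_mem_ne hq₁ u
  rw [mem_unmatchedNeighbors] at hu hu'
  have h' := h.swap hp hu.1 hu.2
  have hq' : q ∈ insert (p.1, u) (P.erase p) := mem_insert_of_mem (mem_erase.2 ⟨hpq.symm, hq⟩)
  have hu'' := notMem_endpoints_swap hp hu'.1 hu'u
  have hp₂ : p.2 ∈ endpoints P := mem_endpoints_of_mem hp (by simp)
  refine (h'.swap hq' hu'' hu'.2).not_adj_and_adj
    (mem_insert_of_mem (mem_erase.2 ⟨hlq, mem_insert_of_mem (mem_erase.2 ⟨hlp, hl⟩)⟩))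
    (notMem_endpoints_swap hq' (h.isPairMatching.snd_notMem_endpoints_swap hp hu.1)
      fun e => hu'.1 (e ▸ hp₂))
    (h'.isPairMatching.snd_notMem_endpoints_swap hq' hu'')
    (fun e => hpq (h.isPairMatching.eq_of_mem hp hq (v := p.2) (by simp) (e ▸ by simp)))
    ⟨hpl.symm, hql.symm⟩

lemma card_filter_adj_snd_le (h : IsMaxPairMatching H P) (hp : p ∈ strongPairs H P) :
    #{w ∈ endpoints (strongPairs H P) | H.Adj p.2 w} ≤ #(strongPairs H P) := by
  refine (card_le_card fun w hw => ?_).trans (card_image_le (f := Prod.fst))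
  obtain ⟨hw, hadj⟩ := mem_filter.1 hw
  obtain ⟨q, hq, hwq⟩ := mem_endpoints.1 hw
  simp only [mem_insert, mem_singleton] at hwq
  rcases hwq with rfl | rfl
  · exact mem_image_of_mem _ hq
  · obtain rfl | hpq := eq_or_ne p q
    · exact absurd hadj (H.loopless.irrefl _)
    · rw [strongPairs, mem_filter] at hp hq
      exact absurd hadj (h.not_adj_snd_snd hp.1 hq.1 hpq hp.2 hq.2)

lemma chargedDegree_add_le_of_mem_strongPairs (h : IsMaxPairMatching H P)
    (hp : p ∈ strongPairs H P) :
    chargedDegree H P p.1 + chargedDegree H P p.2 ≤ 2 * #P + 2 * #(endpoints P)ᶜ +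
      #(strongPairs H P) + #{w ∈ endpoints (P \ strongPairs H P) | H.Adj p.2 w} := by
  set T := strongPairs H P
  have hsplit : endpoints P = endpoints T ∪ endpoints (P \ T) := by
    rw [← endpoints_union, union_sdiff_of_subset (show T ⊆ P from filter_subset _ _)]
  have h₂ : #{w ∈ endpoints P | H.Adj p.2 w} ≤
      #{w ∈ endpoints T | H.Adj p.2 w} + #{w ∈ endpoints (P \ T) | H.Adj p.2 w} := by
    rw [hsplit, filter_union]; exact card_union_le _ _
  have : #{w ∈ endpoints T | H.Adj p.2 w} ≤ #T := h.card_filter_adj_snd_le hp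
  have : #{w ∈ endpoints P | H.Adj p.1 w} ≤ 2 * #P :=
    (card_filter_le _ _).trans h.isPairMatching.card_endpoints.le
  have : #(unmatchedNeighbors H P p.1) ≤ #(endpoints P)ᶜ := card_filter_le _ _
  simp only [chargedDegree, h.unmatchedNeighbors_snd_eq_empty (mem_filter.1 hp).1
    (mem_filter.1 hp).2, card_empty]
  omega

lemma sum_card_filter_adj_snd_le (h : IsMaxPairMatching H P) :
    ∑ p ∈ strongPairs H P, #{w ∈ endpoints (P \ strongPairs H P) | H.Adj p.2 w}
      ≤ #(P \ strongPairs H P) * (#(strongPairs H P) + 1) := by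
  set T := strongPairs H P
  have hswap := sum_card_bipartiteAbove_eq_sum_card_bipartiteBelow
    (fun (p : W × W) w => H.Adj p.2 w) (s := T) (t := endpoints (P \ T))
  simp only [bipartiteAbove, bipartiteBelow] at hswap
  rw [hswap, (h.isPairMatching.subset sdiff_subset).sum_endpoints, ← smul_eq_mul, ← sum_const]
  refine sum_le_sum fun l hl => card_add_card_le_card_add_one (filter_subset _ _)
    (filter_subset _ _) fun p hp q hq => ?_
  obtain ⟨hpT, hpl⟩ := mem_filter.1 hp
  obtain ⟨hqT, hql⟩ := mem_filter.1 hq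
  obtain ⟨hlP, hlT⟩ := mem_sdiff.1 hl
  by_contra hpq
  exact h.not_adj_snd_fst_and_adj_snd_snd (mem_filter.1 hpT).1 (mem_filter.1 hqT).1 hlP hpq
    (fun e => hlT (e ▸ hpT)) (fun e => hlT (e ▸ hqT)) (mem_filter.1 hpT).2 (mem_filter.1 hqT).2
    ⟨hpl, hql⟩

lemma two_mul_card_edgeFinset_le_of_forall_le (h : IsMaxPairMatching H P)
    (horient : ∀ p ∈ P, #(unmatchedNeighbors H P p.2) ≤ #(unmatchedNeighbors H P p.1)) :
    2 * #H.edgeFinset ≤ #P * max (2 * Fintype.card W - #P) (4 * #P + 5) := by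
  set T := strongPairs H P
  set U := #(endpoints P)ᶜ
  have hTP : T ⊆ P := filter_subset _ _
  have hk : U + 2 * #P = Fintype.card W := by
    rw [← h.isPairMatching.card_endpoints, card_compl_add_card]
  have hν : #(P \ T) + #T = #P := card_sdiff_add_card_eq_card hTP
  calc 2 * #H.edgeFinset = ∑ p ∈ P, (chargedDegree H P p.1 + chargedDegree H P p.2) := by
        rw [two_mul_card_edgeFinset_eq_sum _ fun u hu v hv => h.not_adj hu hv,
          h.isPairMatching.sum_endpoints]
        rfl
    _ = ∑ p ∈ P \ T, (chargedDegree H P p.1 + chargedDegree H P p.2) +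
        ∑ p ∈ T, (chargedDegree H P p.1 + chargedDegree H P p.2) := (sum_sdiff hTP).symm
    _ ≤ #(P \ T) * (4 * #P + 4) + (#T * (2 * #P + 2 * U + #T) + #(P \ T) * (#T + 1)) := by
        gcongr
        · simpa using sum_le_sum fun p hp =>
            h.isPairMatching.chargedDegree_add_le_of_notMem_strongPairs (mem_sdiff.1 hp).1
              (mem_sdiff.1 hp).2 (horient p (mem_sdiff.1 hp).1)
        · refine (sum_le_sum fun p hp => h.chargedDegree_add_le_of_mem_strongPairs hp).trans ?_
          rw [sum_add_distrib, sum_const, smul_eq_mul]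
          gcongr
          exact h.sum_card_filter_adj_snd_le
    _ = #T * (2 * Fintype.card W - #P) + #(P \ T) * (4 * #P + 5) := by
        rw [← hk, ← hν, show ∀ a b c : ℕ, 2 * (a + 2 * (b + c)) - (b + c) = 2 * a + 3 * (b + c)
          from fun _ _ _ => by omega]
        ring
    _ ≤ #P * max (2 * Fintype.card W - #P) (4 * #P + 5) := by
        rw [← hν, add_mul, add_comm]
        gcongr
        exacts [le_max_right _ _, le_max_left _ _]

lemma two_mul_card_edgeFinset_le (h : IsMaxPairMatching H P) :
    2 * #H.edgeFinset ≤ #P * max (2 * Fintype.card W - #P) (4 * #P + 5) := by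
  obtain ⟨P', h', hends, horient⟩ := h.exists_orient fun v => #(unmatchedNeighbors H P v)
  have hcard : #P' = #P := (h.card_le P' h'.isPairMatching).antisymm (h'.card_le P h.isPairMatching)
  have hN : unmatchedNeighbors H P' = unmatchedNeighbors H P := by
    unfold unmatchedNeighbors; rw [hends]
  rw [← hcard]
  exact h'.two_mul_card_edgeFinset_le_of_forall_le (hN ▸ horient)

end IsMaxPairMatching

lemma exists_isPairMatching_card_eq {M : ℕ} {s : ℝ} (hs : 3 / 5 ≤ s)
    (hM : (M : ℝ) ≤ (1 - s) * Fintype.card W)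
    (hE : (1 - s ^ 2) * ((Fintype.card W).choose 2 : ℕ) ≤ (#H.edgeFinset : ℝ)) :
    ∃ P, IsPairMatching H P ∧ #P = M := by
  obtain ⟨P, hP⟩ := exists_isMaxPairMatching H
  obtain hMP | hPM := le_or_gt M #P
  · obtain ⟨Q, hQP, hQ⟩ := exists_subset_card_eq hMP
    exact ⟨Q, hP.isPairMatching.subset hQP, hQ⟩
  have hP2 : #P ≤ 2 * Fintype.card W := by
    have := hP.isPairMatching.card_endpoints ▸ card_le_univ (endpoints P)
    omega
  have hbound : (2 * #H.edgeFinset : ℝ) ≤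
      #P * max (2 * (Fintype.card W : ℝ) - #P) (4 * #P + 5) := by
    have := (Nat.cast_le (α := ℝ)).2 hP.two_mul_card_edgeFinset_le
    push_cast [Nat.cast_sub hP2] at this
    exact this
  have hlt := mul_max_lt_of_add_one_le (Nat.cast_nonneg #P) (Nat.cast_nonneg (Fintype.card W)) hs
    ((show (#P : ℝ) + 1 ≤ M by exact_mod_cast hPM).trans hM)
  rw [Nat.cast_choose_two] at hE
  linarith

end Counting

variable {V : Type*} [DecidableEq V] (G : SimpleGraph V) [DecidableRel G.Adj]

lemma exists_isPairMatching_induce (S : Finset V) {M : ℕ} {s : ℝ} (hs : 3 / 5 ≤ s)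
    (hM : (M : ℝ) ≤ (1 - s) * #S)
    (hE : (1 - s ^ 2) * ((#S).choose 2 : ℕ) ≤ ((G.induce (S : Set V)).edgeSet.ncard : ℝ)) :
    ∃ P, IsPairMatching G P ∧ #P = M ∧ endpoints P ⊆ S := by
  have hcard : Fintype.card (S : Set V) = #S := by simp
  rw [← coe_edgeFinset, Set.ncard_coe_finset] at hE
  obtain ⟨P, hP, hPM⟩ := exists_isPairMatching_card_eq hs (hcard ▸ hM) (hcard ▸ hE)
  refine ⟨_, hP.map (Embedding.induce _), by rw [card_map, hPM], ?_⟩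
  rw [endpoints_map]
  intro v hv
  obtain ⟨w, -, rfl⟩ := mem_map.1 hv
  exact w.2

lemma ncard_le_choose_mul_choose [Fintype V] {𝒮 : Set (Finset V)} {k M : ℕ}
    (h𝒮 : ∀ S ∈ 𝒮, #S = k ∧ ∃ P, IsPairMatching G P ∧ #P = M ∧ endpoints P ⊆ S) :
    𝒮.ncard ≤ (#G.edgeFinset).choose M * (Fintype.card V).choose (k - 2 * M) := by
  set codes := G.edgeFinset.powersetCard M ×ˢ (univ : Finset V).powersetCard (k - 2 * M)
  have hdecode : 𝒮 ⊆ codes.image fun x => x.1.biUnion Sym2.toFinset ∪ x.2 := by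
    intro S hS
    obtain ⟨hSk, P, hP, hPM, hPS⟩ := h𝒮 S hS
    have hinj : Set.InjOn (fun p : V × V => s(p.1, p.2)) P := fun p hp q hq hpq =>
      hP.eq_of_mem hp hq (v := p.1) (by simp) (by
        have : p.1 ∈ s(q.1, q.2) :=
          (show s(p.1, p.2) = s(q.1, q.2) from hpq) ▸ Sym2.mem_mk_left _ _
        simpa [Sym2.mem_iff] using this)
    refine mem_image.2 ⟨(P.image fun p => s(p.1, p.2), S \ endpoints P), ?_, ?_⟩
    · refine mem_product.2 ⟨mem_powersetCard.2 ⟨fun e he => ?_, ?_⟩,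
        mem_powersetCard.2 ⟨subset_univ _, ?_⟩⟩
      · obtain ⟨p, hp, rfl⟩ := mem_image.1 he
        exact mem_edgeFinset.2 (hP.adj p hp)
      · rw [card_image_of_injOn hinj, hPM]
      · rw [card_sdiff_of_subset hPS, hP.card_endpoints, hSk, hPM]
    · have : (P.image fun p => s(p.1, p.2)).biUnion Sym2.toFinset = endpoints P := by
        simp only [endpoints, image_biUnion, Sym2.toFinset_mk_eq]
      simp only [this, union_sdiff_of_subset hPS]
  calc 𝒮.ncard ≤ #(codes.image fun x => x.1.biUnion Sym2.toFinset ∪ x.2) := by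
        simpa only [Set.ncard_coe_finset] using Set.ncard_le_ncard hdecode
    _ ≤ #codes := card_image_le
    _ = _ := by simp [codes, card_powersetCard]

end SimpleGraph

open SimpleGraph in
theorem count_beta_covered_small_general {V : Type} [Fintype V] (n m k : ℕ) (β : ℝ)
    (hβ0 : 0 ≤ β) (hβ1 : β ≤ 16 / 25) (hm : 1 ≤ m) (hn : 1 ≤ n)
    (G : SimpleGraph V) (hcard : Fintype.card V = n) (hedges : G.edgeSet.ncard = m) :
    (({S : Finset V | S.card = k ∧
          β * (k.choose 2 : ℕ) ≤ ((G.induce (S : Set V)).edgeSet.ncard : ℝ)}.ncard : ℕ) : ℝ)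
      ≤ (m : ℝ) ^ ((1 - Real.sqrt (1 - β)) * k + 1)
          * (n : ℝ) ^ ((2 * Real.sqrt (1 - β) - 1) * k + 2) := by
  classical
  set s := √(1 - β)
  have hs : 3 / 5 ≤ s := (Real.le_sqrt (by norm_num) (by linarith)).2 (by linarith)
  have hs1 : s ≤ 1 := Real.sqrt_le_one.2 (by linarith)
  have hβ : β = 1 - s ^ 2 := by rw [Real.sq_sqrt (by linarith)]; ring
  set M := ⌊(1 - s) * k⌋₊
  have hM : (M : ℝ) ≤ (1 - s) * k := Nat.floor_le (mul_nonneg (by linarith) k.cast_nonneg)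
  have hM' : (1 - s) * k < M + 1 := Nat.lt_floor_add_one _
  have h2M : 2 * M ≤ k := by exact_mod_cast (show (2 * M : ℝ) ≤ k by nlinarith)
  have hm' : #G.edgeFinset = m := by rw [← hedges, ← coe_edgeFinset, Set.ncard_coe_finset]
  refine (Nat.cast_le.2 (G.ncard_le_choose_mul_choose (k := k) (M := M) ?_)).trans ?_
  · rintro S ⟨hSk, hSE⟩
    exact ⟨hSk, G.exists_isPairMatching_induce S hs (hSk ▸ hM) (hSk ▸ hβ ▸ hSE)⟩
  have hm1 : (1 : ℝ) ≤ m := by exact_mod_cast hm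
  have hn1 : (1 : ℝ) ≤ n := by exact_mod_cast hn
  rw [hm', hcard]
  calc _ ≤ ((m ^ M * n ^ (k - 2 * M) : ℕ) : ℝ) := by
        exact_mod_cast Nat.mul_le_mul (m.choose_le_pow M) (n.choose_le_pow _)
    _ = (m : ℝ) ^ (M : ℝ) * (n : ℝ) ^ ((k - 2 * M : ℕ) : ℝ) := by
        rw [Real.rpow_natCast, Real.rpow_natCast]; push_cast; rfl
    _ ≤ _ := by
        rw [Nat.cast_sub h2M]
        push_cast
        gcongr <;> linarith

/-- For a graph `G` on `n ≥ 1` vertices with `m ≥ 1` edges and `β ≤ 16/25`, the number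
of `k`-subsets `S` whose induced subgraph has at least `β * C(k,2)` edges is at most
`m ^ ((1-√(1-β))k + 1) * n ^ ((2√(1-β) - 1)k + 2)`. -/
theorem count_beta_covered_small {V : Type} [Fintype V] (n m k : ℕ) (β : ℝ)
    (hβ0 : 0 ≤ β) (hβ1 : β ≤ 16 / 25) (hm : 1 ≤ m) (hn : 1 ≤ n) (hk : 1 ≤ k)
    (G : SimpleGraph V) (hcard : Fintype.card V = n) (hedges : G.edgeSet.ncard = m) :
    (({S : Finset V | S.card = k ∧
          β * (k.choose 2 : ℕ) ≤ ((G.induce (S : Set V)).edgeSet.ncard : ℝ)}.ncard : ℕ) : ℝ)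
      ≤ (m : ℝ) ^ ((1 - Real.sqrt (1 - β)) * k + 1)
          * (n : ℝ) ^ ((2 * Real.sqrt (1 - β) - 1) * k + 2) :=
  count_beta_covered_small_general n m k β hβ0 hβ1 hm hn G hcard hedges
end
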